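/- arXiv:1802.08855 — 6 statements merged into one kernel-verified Lean document; each statement's English description precedes it below -/
import Mathlib

section
/- Let (Ω,ρ) be a metric space, r ∈ [1,∞), and n a positive integer. For every integer k with 1 ≤ k ≤ 32n and every subset S ⊆ Ω with |S| = k, the minimax risk for estimating a Borel probability measure on Ω from n i.i.d. samples under W_r^r loss satisfies inf_{P̂} sup_{P} E_{X_1,…,X_n ∼ P^n}[ W_r^r(P, P̂(X_1,…,X_n)) ] ≥ (3·log 2 / 2^{r+12}) · Sep(S)^r · √((k−1)/n), where Sep(S) := inf_{x≠y∈S} ρ(x,y), the supremum is over all Borel probability measures P on Ω, and the infimum is over all (possibly randomized) measurable estimators P̂ : Ω^n → {Borel probability measures on Ω}. -/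
open MeasureTheory ENNReal

noncomputable section

def couplings {Ω : Type*} [MeasurableSpace Ω] (P Q : Measure Ω) : Set (Measure (Ω × Ω)) :=
  {μ | μ.map Prod.fst = P ∧ μ.map Prod.snd = Q}

/-- `W_r^r(P,Q)`, the `r`-th power of the `r`-Wasserstein distance. -/
def wassersteinPow {Ω : Type*} [MeasurableSpace Ω] [PseudoEMetricSpace Ω] (r : ℝ)
    (P Q : Measure Ω) : ℝ≥0∞ :=
  ⨅ μ ∈ couplings P Q, ∫⁻ p : Ω × Ω, edist p.1 p.2 ^ r ∂μ

def wasserstein {Ω : Type*} [MeasurableSpace Ω] [PseudoEMetricSpace Ω] (r : ℝ)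
    (P Q : Measure Ω) : ℝ≥0∞ :=
  (wassersteinPow r P Q) ^ (1 / r)

def empiricalMeasure {Ω : Type*} [MeasurableSpace Ω] (n : ℕ) (x : Fin n → Ω) : Measure Ω :=
  (n : ℝ≥0∞)⁻¹ • ∑ i : Fin n, Measure.dirac (x i)

def IsBorelPartitionOf {Ω : Type*} [MeasurableSpace Ω] (𝒮 : Set (Set Ω)) (B : Set Ω) : Prop :=
  (∀ S ∈ 𝒮, MeasurableSet S) ∧ ⋃₀ 𝒮 = B ∧ 𝒮.PairwiseDisjoint id

def partRes {Ω : Type*} [PseudoEMetricSpace Ω] (𝒮 : Set (Set Ω)) : ℝ≥0∞ :=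
  ⨆ S ∈ 𝒮, EMetric.diam S

def coveringNumber {Ω : Type*} [MeasurableSpace Ω] [PseudoEMetricSpace Ω]
    (B : Set Ω) (ε : ℝ) : ℝ≥0∞ :=
  ⨅ (𝒮 : Set (Set Ω)) (_ : IsBorelPartitionOf 𝒮 B ∧ 𝒮.Countable ∧
      ∀ S ∈ 𝒮, EMetric.diam S ≤ ENNReal.ofReal ε), (𝒮.encard : ℝ≥0∞)

def eSep {Ω : Type*} [PseudoEMetricSpace Ω] (S : Set Ω) : ℝ≥0∞ :=
  ⨅ (x ∈ S) (y ∈ S) (_ : x ≠ y), edist x y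

/-- `|a - b|` for extended nonnegative reals. -/
def ennrDiff (a b : ℝ≥0∞) : ℝ≥0∞ := (a - b) + (b - a)

def metricMoment {Ω : Type*} [MeasurableSpace Ω] [PseudoEMetricSpace Ω]
    (P : Measure Ω) (x₀ : Ω) (ℓ : ℝ) : ℝ≥0∞ :=
  (∫⁻ y, edist x₀ y ^ ℓ ∂P) ^ (1 / ℓ)

end

/-!
Assouad's method. Choose `2m = 2⌊k/2⌋` points of `S`, grouped into `m` pairs, and for every
`τ ∈ {0,1}^m` let `P_τ` put mass `(1 ± δ)/(2m)` on the two points of each pair, the sign chosen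
by `τ`. The points are `ε = Sep(S)`-separated, so a coupling of `P_τ` with `Q` has to move the
excess of each atom over the `ε/2`-ball around it by at least `ε/2`; hence `W_r^r(P_τ, Q)` is at
least `(ε/2)^r / 2` times the `ℓ¹`-distance between these masses, a sum of `m` pair losses.
Flipping one coordinate of `τ` moves the masses of one pair by `δ/m`, while the `n`-fold
products of the two hypotheses keep an overlap of mass `≥ 1/4` as long as `4nδ² ≤ m` (Hellinger
affinity and Cauchy–Schwarz). Assouad's lemma then bounds the maximal risk below by
`(ε/2)^r δ/8`, and `δ = (3 log 2 / 512) √((k-1)/n)` gives the constant.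
-/

lemma ennrDiff_comm (a b : ℝ≥0∞) : ennrDiff a b = ennrDiff b a := add_comm _ _

lemma ennrDiff_le_add (a b c : ℝ≥0∞) : ennrDiff a c ≤ ennrDiff a b + ennrDiff b c :=
  calc (a - c) + (c - a) ≤ (a - b + (b - c)) + (c - b + (b - a)) :=
        add_le_add tsub_le_tsub_add_tsub tsub_le_tsub_add_tsub
    _ = ennrDiff a b + ennrDiff b c := by unfold ennrDiff; ring

lemma ennrDiff_ofReal {x y : ℝ} (hx : 0 ≤ x) (hy : 0 ≤ y) :
    ennrDiff (ENNReal.ofReal x) (ENNReal.ofReal y) = ENNReal.ofReal |x - y| := by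
  rw [ennrDiff, ← ofReal_sub _ hy, ← ofReal_sub _ hx]
  rcases le_total x y with h | h
  · rw [ofReal_of_nonpos (sub_nonpos.mpr h), zero_add, abs_of_nonpos (sub_nonpos.mpr h), neg_sub]
  · rw [ofReal_of_nonpos (sub_nonpos.mpr h), add_zero, abs_of_nonneg (sub_nonneg.mpr h)]

lemma sum_tsub_le_sum_tsub_of_sum_le {ι : Type*} (s : Finset ι) {a b : ι → ℝ≥0∞}
    (hab : ∑ i ∈ s, b i ≤ ∑ i ∈ s, a i) (ha : ∑ i ∈ s, a i ≠ ∞) :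
    ∑ i ∈ s, (b i - a i) ≤ ∑ i ∈ s, (a i - b i) := by
  refine ENNReal.le_of_add_le_add_right ha ?_
  calc ∑ i ∈ s, (b i - a i) + ∑ i ∈ s, a i = ∑ i ∈ s, (a i - b i) + ∑ i ∈ s, b i := by
        simp only [← Finset.sum_add_distrib, tsub_add_eq_max, max_comm]
    _ ≤ ∑ i ∈ s, (a i - b i) + ∑ i ∈ s, a i := by gcongr

lemma eSep_le_edist {Ω : Type*} [PseudoEMetricSpace Ω] {S : Set Ω} {x y : Ω}
    (hx : x ∈ S) (hy : y ∈ S) (hxy : x ≠ y) : eSep S ≤ edist x y :=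
  iInf₂_le_of_le x hx (iInf₂_le_of_le y hy (iInf_le _ hxy))

lemma pairwise_disjoint_eball_half {Ω ι : Type*} [PseudoEMetricSpace Ω] {q : ι → Ω}
    {ε : ℝ≥0∞} (hsep : ∀ u v, u ≠ v → ε ≤ edist (q u) (q v)) :
    Pairwise (Function.onFun Disjoint fun u => Metric.eball (q u) (ε / 2)) := by
  refine fun u v huv => Set.disjoint_left.mpr fun z hzu hzv => ?_
  have : edist (q u) (q v) < ε := by
    calc edist (q u) (q v) ≤ edist z (q u) + edist z (q v) := edist_triangle_left _ _ _
      _ < ε / 2 + ε / 2 := ENNReal.add_lt_add hzu hzv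
      _ = ε := ENNReal.add_halves ε
  exact (hsep u v huv).not_gt this

/-- Any coupling moves the mass `P {q u} - Q (ball (q u) ρ)` at least a distance `ρ`. -/
lemma rpow_mul_sum_tsub_le_wassersteinPow {Ω ι : Type*} [PseudoEMetricSpace Ω]
    [MeasurableSpace Ω] [OpensMeasurableSpace Ω] [MeasurableSingletonClass Ω] [Fintype ι]
    {q : ι → Ω} (hq : Function.Injective q) (ρ : ℝ≥0∞) {r : ℝ} (hr : 0 ≤ r) (P Q : Measure Ω) :
    ρ ^ r * ∑ u, (P {q u} - Q (Metric.eball (q u) ρ)) ≤ wassersteinPow r P Q := by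
  refine le_iInf₂ fun μ ⟨hμP, hμQ⟩ => ?_
  set F : ι → Set (Ω × Ω) := fun u => {q u} ×ˢ (Metric.eball (q u) ρ)ᶜ
  have hF : ∀ u, MeasurableSet (F u) := fun u =>
    (measurableSet_singleton _).prod Metric.isOpen_eball.measurableSet.compl
  have hFdisj : Pairwise (Function.onFun Disjoint F) := fun u v huv =>
    Set.disjoint_left.mpr fun p hpu hpv => huv (hq (hpu.1.symm.trans hpv.1))
  have hmass : ∀ u, P {q u} - Q (Metric.eball (q u) ρ) ≤ μ (F u) := by
    intro u
    rw [tsub_le_iff_right, ← hμP, ← hμQ, Measure.map_apply measurable_fst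
      (measurableSet_singleton _), Measure.map_apply measurable_snd
      Metric.isOpen_eball.measurableSet]
    calc μ (Prod.fst ⁻¹' {q u}) ≤ μ (F u ∪ Prod.snd ⁻¹' Metric.eball (q u) ρ) :=
          measure_mono fun p hp => by
            by_cases hb : p.2 ∈ Metric.eball (q u) ρ
            exacts [Or.inr hb, Or.inl ⟨hp, hb⟩]
      _ ≤ μ (F u) + μ (Prod.snd ⁻¹' Metric.eball (q u) ρ) := measure_union_le _ _
  have hfar : ∀ p ∈ ⋃ u, F u, ρ ^ r ≤ edist p.1 p.2 ^ r := by
    simp only [Set.mem_iUnion]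
    rintro ⟨a, b⟩ ⟨u, ha, hb⟩
    rw [Set.mem_singleton_iff.mp ha, edist_comm]
    exact ENNReal.rpow_le_rpow (not_lt.mp hb) hr
  calc ρ ^ r * ∑ u, (P {q u} - Q (Metric.eball (q u) ρ)) ≤ ρ ^ r * μ (⋃ u, F u) := by
        rw [measure_iUnion hFdisj hF, tsum_fintype]
        gcongr with u
        exact hmass u
    _ = ∫⁻ p, (⋃ u, F u).indicator (fun _ => ρ ^ r) p ∂μ :=
        (lintegral_indicator_const (MeasurableSet.iUnion hF) _).symm
    _ ≤ ∫⁻ p, edist p.1 p.2 ^ r ∂μ := lintegral_mono fun p => by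
        by_cases hp : p ∈ ⋃ u, F u
        · rw [Set.indicator_of_mem hp]; exact hfar p hp
        · rw [Set.indicator_of_notMem hp]; exact zero_le

lemma rpow_mul_sum_ennrDiff_le_two_mul_wassersteinPow {Ω ι : Type*} [PseudoEMetricSpace Ω]
    [MeasurableSpace Ω] [OpensMeasurableSpace Ω] [MeasurableSingletonClass Ω] [Fintype ι]
    {q : ι → Ω} (hq : Function.Injective q) {ε : ℝ≥0∞}
    (hsep : ∀ u v, u ≠ v → ε ≤ edist (q u) (q v)) {r : ℝ} (hr : 0 ≤ r)
    (P Q : Measure Ω) [IsProbabilityMeasure Q] (hP : ∑ u, P {q u} = 1) :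
    (ε / 2) ^ r * ∑ u, ennrDiff (P {q u}) (Q (Metric.eball (q u) (ε / 2)))
      ≤ 2 * wassersteinPow r P Q := by
  have hQ : ∑ u, Q (Metric.eball (q u) (ε / 2)) ≤ ∑ u, P {q u} :=
    calc ∑ u, Q (Metric.eball (q u) (ε / 2)) = Q (⋃ u, Metric.eball (q u) (ε / 2)) := by
          rw [measure_iUnion (pairwise_disjoint_eball_half hsep)
            fun _ => Metric.isOpen_eball.measurableSet, tsum_fintype]
      _ ≤ ∑ u, P {q u} := hP ▸ prob_le_one
  have hW := rpow_mul_sum_tsub_le_wassersteinPow hq (ε / 2) hr P Q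
  calc (ε / 2) ^ r * ∑ u, ennrDiff (P {q u}) (Q (Metric.eball (q u) (ε / 2)))
      = (ε / 2) ^ r * ∑ u, (P {q u} - Q (Metric.eball (q u) (ε / 2)))
        + (ε / 2) ^ r * ∑ u, (Q (Metric.eball (q u) (ε / 2)) - P {q u}) := by
        simp only [ennrDiff, Finset.sum_add_distrib, mul_add]
    _ ≤ wassersteinPow r P Q + wassersteinPow r P Q := by
        refine add_le_add hW (le_trans ?_ hW)
        gcongr 1
        exact sum_tsub_le_sum_tsub_of_sum_le _ hQ (by simp [hP])
    _ = 2 * wassersteinPow r P Q := (two_mul _).symm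

section FinitelySupported

variable {X ι : Type*} [MeasurableSpace X] [Fintype ι]

lemma pi_sum_smul_dirac (n : ℕ) (y : ι → X) (c : ι → ℝ≥0∞) (hc : ∑ v, c v = 1) :
    Measure.pi (fun _ : Fin n => ∑ v, c v • Measure.dirac (y v))
      = ∑ f : Fin n → ι, (∏ i, c (f i)) • Measure.dirac (y ∘ f) := by
  classical
  have : IsProbabilityMeasure (∑ v, c v • Measure.dirac (y v)) := ⟨by simpa using hc⟩
  refine Measure.pi_eq fun B hB => ?_
  simp only [Measure.coe_finsetSum, Finset.sum_apply, Measure.smul_apply,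
    Measure.dirac_apply' _ (MeasurableSet.univ_pi hB), Measure.dirac_apply' _ (hB _), smul_eq_mul,
    Fintype.prod_sum]
  refine Finset.sum_congr rfl fun f _ => ?_
  simp [Set.indicator_apply, Finset.prod_ite_zero]

/-- Le Cam's two-point bound for finitely supported measures. -/
lemma mul_sum_min_le_lintegral_add_lintegral (y : ι → X) (a b : ι → ℝ≥0∞) {g h : X → ℝ≥0∞}
    (hg : Measurable g) (hh : Measurable h) {C : ℝ≥0∞} (hC : ∀ x, C ≤ g x + h x) :
    C * ∑ f, min (a f) (b f)
      ≤ ∫⁻ x, g x ∂(∑ f, a f • Measure.dirac (y f))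
        + ∫⁻ x, h x ∂(∑ f, b f • Measure.dirac (y f)) := by
  simp only [lintegral_finsetSum_measure, lintegral_smul_measure, lintegral_dirac' _ hg,
    lintegral_dirac' _ hh, smul_eq_mul, Finset.mul_sum, ← Finset.sum_add_distrib]
  gcongr with f
  calc C * min (a f) (b f) ≤ min (a f) (b f) * (g (y f) + h (y f)) := by
        rw [mul_comm]; gcongr; exact hC _
    _ ≤ a f * g (y f) + b f * h (y f) := by
        rw [mul_add]; gcongr; exacts [min_le_left _ _, min_le_right _ _]

end FinitelySupported

section Affinity

lemma sq_sum_sqrt_mul_le_sum_min_mul_sum_add {ι : Type*} (s : Finset ι) {a b : ι → ℝ}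
    (ha : ∀ i ∈ s, 0 ≤ a i) (hb : ∀ i ∈ s, 0 ≤ b i) :
    (∑ i ∈ s, √(a i * b i)) ^ 2 ≤ (∑ i ∈ s, min (a i) (b i)) * ∑ i ∈ s, (a i + b i) := by
  calc (∑ i ∈ s, √(a i * b i)) ^ 2
      = (∑ i ∈ s, √(min (a i) (b i)) * √(max (a i) (b i))) ^ 2 := by
        congr 1
        refine Finset.sum_congr rfl fun i hi => ?_
        rw [← Real.sqrt_mul (le_min (ha i hi) (hb i hi)), min_mul_max]
    _ ≤ (∑ i ∈ s, √(min (a i) (b i)) ^ 2) * ∑ i ∈ s, √(max (a i) (b i)) ^ 2 :=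
        Finset.sum_mul_sq_le_sq_mul_sq _ _ _
    _ ≤ (∑ i ∈ s, min (a i) (b i)) * ∑ i ∈ s, (a i + b i) := by
        have hmin : ∀ i ∈ s, 0 ≤ min (a i) (b i) := fun i hi => le_min (ha i hi) (hb i hi)
        rw [Finset.sum_congr rfl fun i hi => Real.sq_sqrt (hmin i hi),
          Finset.sum_congr rfl fun i hi => Real.sq_sqrt ((ha i hi).trans (le_max_left _ _))]
        gcongr with i hi
        · exact Finset.sum_nonneg hmin
        · exact max_le_add_of_nonneg (ha i hi) (hb i hi)

variable {ι : Type*} [Fintype ι]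

lemma sum_prod_eq_pow (n : ℕ) (a : ι → ℝ) : ∑ f : Fin n → ι, ∏ i, a (f i) = (∑ v, a v) ^ n := by
  classical
  rw [← Fintype.prod_sum fun _ v => a v, Fin.prod_const]

/-- Le Cam's inequality for `n`-fold products, through the Hellinger affinity `∑ √(a b)`,
which is multiplicative under products. -/
lemma sum_sqrt_mul_pow_le_two_mul_sum_min_prod (n : ℕ) {a b : ι → ℝ} (ha : ∀ v, 0 ≤ a v)
    (hb : ∀ v, 0 ≤ b v) (hsa : ∑ v, a v = 1) (hsb : ∑ v, b v = 1) :
    (∑ v, √(a v * b v)) ^ (2 * n)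
      ≤ 2 * ∑ f : Fin n → ι, min (∏ i, a (f i)) (∏ i, b (f i)) := by
  have hprod : ∀ f : Fin n → ι, √((∏ i, a (f i)) * ∏ i, b (f i)) = ∏ i, √(a (f i) * b (f i)) :=
    fun f => by rw [← Finset.prod_mul_distrib, Real.sqrt_prod _ fun i _ => mul_nonneg (ha _) (hb _)]
  calc (∑ v, √(a v * b v)) ^ (2 * n) = (∑ f : Fin n → ι, √((∏ i, a (f i)) * ∏ i, b (f i))) ^ 2 := by
        rw [Finset.sum_congr rfl fun f _ => hprod f, mul_comm, pow_mul,
          sum_prod_eq_pow n fun v => √(a v * b v)]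
    _ ≤ (∑ f : Fin n → ι, min (∏ i, a (f i)) (∏ i, b (f i)))
          * ∑ f : Fin n → ι, ((∏ i, a (f i)) + ∏ i, b (f i)) :=
        sq_sum_sqrt_mul_le_sum_min_mul_sum_add _ (fun f _ => Finset.prod_nonneg fun i _ => ha _)
          fun f _ => Finset.prod_nonneg fun i _ => hb _
    _ = 2 * ∑ f : Fin n → ι, min (∏ i, a (f i)) (∏ i, b (f i)) := by
        rw [Finset.sum_add_distrib, sum_prod_eq_pow, sum_prod_eq_pow, hsa, hsb]
        ring

end Affinity

/-- Assouad's lemma: pairing each vertex of the cube with its neighbour across coordinate `i`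
and summing over `i`. -/
lemma assouad_hypercube {m : ℕ} (I : Fin m → (Fin m → Bool) → ℝ≥0∞) {γ B : ℝ≥0∞}
    (hpair : ∀ i τ, γ ≤ I i τ + I i (Function.update τ i (!τ i)))
    (hB : ∀ τ, ∑ i, I i τ ≤ B) : m * γ ≤ 2 * B := by
  have hflip : ∀ i, Function.Involutive fun τ : Fin m → Bool => Function.update τ i (!τ i) :=
    fun i τ => by simp
  have hcoord : ∀ i, 2 ^ m * γ ≤ 2 * ∑ τ, I i τ := fun i =>
    calc 2 ^ m * γ = ∑ _τ : Fin m → Bool, γ := by simp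
      _ ≤ ∑ τ, (I i τ + I i (Function.update τ i (!τ i))) := Finset.sum_le_sum fun τ _ => hpair i τ
      _ = 2 * ∑ τ, I i τ := by
        rw [Finset.sum_add_distrib, two_mul]
        congr 1
        exact Equiv.sum_comp (Function.Involutive.toPerm _ (hflip i)) (I i)
  have : 2 ^ m * (m * γ) ≤ 2 ^ m * (2 * B) :=
    calc 2 ^ m * (m * γ) = ∑ _i : Fin m, 2 ^ m * γ := by simp; ring
      _ ≤ ∑ i, 2 * ∑ τ, I i τ := Finset.sum_le_sum fun i _ => hcoord i
      _ = 2 * ∑ τ, ∑ i, I i τ := by rw [← Finset.mul_sum, Finset.sum_comm]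
      _ ≤ 2 * ∑ _τ : Fin m → Bool, B := by gcongr with τ; exact hB τ
      _ = 2 ^ m * (2 * B) := by simp; ring
  exact (ENNReal.mul_le_mul_iff_right (by positivity) (pow_ne_top ofNat_ne_top)).mp this

section Hypercube

variable {m : ℕ} {δ : ℝ}

noncomputable def cubeWeight (m : ℕ) (δ : ℝ) (τ : Fin m → Bool) (u : Fin m × Bool) : ℝ :=
  (1 + if τ u.1 = u.2 then δ else -δ) / (2 * m)

lemma cubeWeight_nonneg (hδ₀ : 0 ≤ δ) (hδ₁ : δ ≤ 1) (τ : Fin m → Bool) (u : Fin m × Bool) :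
    0 ≤ cubeWeight m δ τ u := by
  unfold cubeWeight
  split_ifs <;> exact div_nonneg (by linarith) (by positivity)

lemma sum_bool_cubeWeight (τ : Fin m → Bool) (l : Fin m) :
    ∑ b, cubeWeight m δ τ (l, b) = 1 / m := by
  cases hτ : τ l <;> simp [cubeWeight, hτ] <;> ring

lemma sum_cubeWeight (hm : m ≠ 0) (τ : Fin m → Bool) : ∑ u, cubeWeight m δ τ u = 1 := by
  rw [Fintype.sum_prod_type, Finset.sum_congr rfl fun l _ => sum_bool_cubeWeight τ l]
  simp [hm]

lemma cubeWeight_mul_of_ne {τ τ' : Fin m → Bool} {l : Fin m} (h : τ l ≠ τ' l) (b : Bool) :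
    cubeWeight m δ τ (l, b) * cubeWeight m δ τ' (l, b) = (1 - δ ^ 2) / (2 * m) ^ 2 := by
  unfold cubeWeight
  cases hτ : τ l <;> cases hτ' : τ' l <;> cases b <;> simp_all <;> ring

lemma abs_cubeWeight_sub_of_ne (hδ₀ : 0 ≤ δ) {τ τ' : Fin m → Bool} {l : Fin m}
    (h : τ l ≠ τ' l) (b : Bool) :
    |cubeWeight m δ τ (l, b) - cubeWeight m δ τ' (l, b)| = δ / m := by
  rw [abs_eq (by positivity)]
  unfold cubeWeight
  cases hτ : τ l <;> cases hτ' : τ' l <;> cases b <;> simp_all <;>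
    first | (left; ring1) | (right; ring1)

/-- The Hellinger affinity of two neighbouring vertices of the cube: only the pair `i` differs,
where `√((1 + δ)(1 - δ)) ≥ 1 - δ²`. -/
lemma one_sub_sq_div_le_sum_sqrt_cubeWeight_mul (hm : m ≠ 0) (hδ₀ : 0 ≤ δ) (hδ₁ : δ ≤ 1)
    (τ : Fin m → Bool) (i : Fin m) :
    1 - δ ^ 2 / m
      ≤ ∑ u, √(cubeWeight m δ τ u * cubeWeight m δ (Function.update τ i (!τ i)) u) := by
  set τ' := Function.update τ i (!τ i)
  have hδ2 : δ ^ 2 ≤ 1 := pow_le_one₀ hδ₀ hδ₁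
  have hpair : ∀ l, 1 / m - (if l = i then δ ^ 2 / m else 0)
      ≤ ∑ b, √(cubeWeight m δ τ (l, b) * cubeWeight m δ τ' (l, b)) := by
    intro l
    by_cases hl : l = i
    · subst hl
      have hne : τ l ≠ τ' l := by simp [τ']
      have hsqrt : (1 - δ ^ 2) / (2 * m) ≤ √((1 - δ ^ 2) / (2 * m) ^ 2) := by
        rw [Real.sqrt_div' _ (by positivity), Real.sqrt_sq (by positivity)]
        gcongr
        rw [Real.le_sqrt (by linarith) (by linarith)]
        nlinarith
      simp only [cubeWeight_mul_of_ne hne, if_true, Fintype.sum_bool]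
      calc 1 / (m : ℝ) - δ ^ 2 / m = (1 - δ ^ 2) / (2 * m) + (1 - δ ^ 2) / (2 * m) := by ring
        _ ≤ _ := add_le_add hsqrt hsqrt
    · have heq : ∀ b, cubeWeight m δ τ' (l, b) = cubeWeight m δ τ (l, b) := fun b => by
        simp [cubeWeight, τ', Function.update_of_ne hl]
      simp only [heq, Real.sqrt_mul_self (cubeWeight_nonneg hδ₀ hδ₁ _ _), if_neg hl, sub_zero,
        sum_bool_cubeWeight, le_refl]
  calc 1 - δ ^ 2 / m = ∑ l, (1 / m - (if l = i then δ ^ 2 / m else 0)) := by simp [hm]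
    _ ≤ _ := by rw [Fintype.sum_prod_type]; exact Finset.sum_le_sum fun l _ => hpair l

lemma one_fourth_le_sum_min_prod_cubeWeight (hm : m ≠ 0) (hδ₀ : 0 ≤ δ) (hδ₁ : δ ≤ 1) {n : ℕ}
    (hδn : 4 * n * δ ^ 2 ≤ m) (τ : Fin m → Bool) (i : Fin m) :
    1 / 4 ≤ ∑ f : Fin n → Fin m × Bool, min (∏ j, cubeWeight m δ τ (f j))
      (∏ j, cubeWeight m δ (Function.update τ i (!τ i)) (f j)) := by
  have hm' : (1 : ℝ) ≤ m := by exact_mod_cast Nat.one_le_iff_ne_zero.mpr hm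
  have hsmall : δ ^ 2 / m ≤ 1 := div_le_one_of_le₀ (by nlinarith) (by linarith)
  have hbern : 1 / 2 ≤ (1 - δ ^ 2 / m) ^ (2 * n) := by
    have h := one_add_mul_le_pow (a := -(δ ^ 2 / m)) (by linarith) (2 * n)
    have : (2 * n : ℝ) * (δ ^ 2 / m) ≤ 1 / 2 := by
      rw [mul_div_assoc', div_le_iff₀ (by linarith)]; linarith
    rw [← sub_eq_add_neg] at h
    push_cast at h
    linarith
  have hLeCam := sum_sqrt_mul_pow_le_two_mul_sum_min_prod n (cubeWeight_nonneg hδ₀ hδ₁ τ)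
    (cubeWeight_nonneg hδ₀ hδ₁ (Function.update τ i (!τ i))) (sum_cubeWeight hm _)
    (sum_cubeWeight hm _)
  have hA := one_sub_sq_div_le_sum_sqrt_cubeWeight_mul hm hδ₀ hδ₁ τ i
  have : (1 - δ ^ 2 / m) ^ (2 * n) ≤ (∑ u, √(cubeWeight m δ τ u
      * cubeWeight m δ (Function.update τ i (!τ i)) u)) ^ (2 * n) := by
    gcongr
  linarith

end Hypercube

section HypercubeMeasures

variable {Ω : Type*} [MeasurableSpace Ω] {m : ℕ} {δ : ℝ}

noncomputable def cubeMeasure (q : Fin m × Bool → Ω) (δ : ℝ) (τ : Fin m → Bool) : Measure Ω :=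
  ∑ u, ENNReal.ofReal (cubeWeight m δ τ u) • Measure.dirac (q u)

lemma sum_ofReal_cubeWeight (hm : m ≠ 0) (hδ₀ : 0 ≤ δ) (hδ₁ : δ ≤ 1) (τ : Fin m → Bool) :
    ∑ u, ENNReal.ofReal (cubeWeight m δ τ u) = 1 := by
  rw [← ofReal_sum_of_nonneg fun u _ => cubeWeight_nonneg hδ₀ hδ₁ τ u, sum_cubeWeight hm,
    ofReal_one]

lemma isProbabilityMeasure_cubeMeasure (hm : m ≠ 0) (hδ₀ : 0 ≤ δ) (hδ₁ : δ ≤ 1)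
    (q : Fin m × Bool → Ω) (τ : Fin m → Bool) : IsProbabilityMeasure (cubeMeasure q δ τ) :=
  ⟨by simp [cubeMeasure, sum_ofReal_cubeWeight hm hδ₀ hδ₁]⟩

lemma cubeMeasure_singleton [MeasurableSingletonClass Ω] {q : Fin m × Bool → Ω}
    (hq : Function.Injective q) (τ : Fin m → Bool) (u : Fin m × Bool) :
    cubeMeasure q δ τ {q u} = ENNReal.ofReal (cubeWeight m δ τ u) := by
  simp only [cubeMeasure, Measure.coe_finsetSum, Finset.sum_apply, Measure.smul_apply,
    Measure.dirac_apply, smul_eq_mul]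
  classical
  simp [Set.indicator_apply, hq.eq_iff]

noncomputable def pairLoss [PseudoEMetricSpace Ω] (q : Fin m × Bool → Ω) (ρ : ℝ≥0∞)
    (P Q : Measure Ω) (i : Fin m) : ℝ≥0∞ :=
  ∑ b, ennrDiff (P {q (i, b)}) (Q (Metric.eball (q (i, b)) ρ))

lemma measurable_pairLoss_comp [PseudoEMetricSpace Ω] [OpensMeasurableSpace Ω] {X : Type*}
    [MeasurableSpace X] {est : X → Measure Ω} (hest : Measurable est) (q : Fin m × Bool → Ω)
    (ρ : ℝ≥0∞) (P : Measure Ω) (i : Fin m) : Measurable fun x => pairLoss q ρ P (est x) i := by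
  unfold pairLoss ennrDiff
  have hball : ∀ b, Measurable fun x => est x (Metric.eball (q (i, b)) ρ) := fun b =>
    (Measure.measurable_coe Metric.isOpen_eball.measurableSet).comp hest
  fun_prop

lemma ofReal_two_mul_div_le_pairLoss_add [PseudoEMetricSpace Ω] [MeasurableSingletonClass Ω]
    {q : Fin m × Bool → Ω} (hq : Function.Injective q) (hδ₀ : 0 ≤ δ) (hδ₁ : δ ≤ 1) (ρ : ℝ≥0∞)
    {τ τ' : Fin m → Bool} {i : Fin m} (h : τ i ≠ τ' i) (Q : Measure Ω) :
    ENNReal.ofReal (2 * δ / m)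
      ≤ pairLoss q ρ (cubeMeasure q δ τ) Q i + pairLoss q ρ (cubeMeasure q δ τ') Q i := by
  have hb : ∀ b, ENNReal.ofReal (δ / m)
      ≤ ennrDiff (cubeMeasure q δ τ {q (i, b)}) (Q (Metric.eball (q (i, b)) ρ))
        + ennrDiff (cubeMeasure q δ τ' {q (i, b)}) (Q (Metric.eball (q (i, b)) ρ)) := by
    intro b
    rw [cubeMeasure_singleton hq, cubeMeasure_singleton hq,
      ennrDiff_comm (ENNReal.ofReal (cubeWeight m δ τ' (i, b))),
      ← abs_cubeWeight_sub_of_ne hδ₀ h b,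
      ← ennrDiff_ofReal (cubeWeight_nonneg hδ₀ hδ₁ _ _) (cubeWeight_nonneg hδ₀ hδ₁ _ _)]
    exact ennrDiff_le_add _ _ _
  calc ENNReal.ofReal (2 * δ / m) = ∑ _b : Bool, ENNReal.ofReal (δ / m) := by
        rw [Fintype.sum_bool, ← ofReal_add (by positivity) (by positivity)]
        congr 1
        ring
    _ ≤ _ := by
        simp only [pairLoss, ← Finset.sum_add_distrib]
        exact Finset.sum_le_sum fun b _ => hb b

lemma rpow_mul_sum_pairLoss_le_two_mul_wassersteinPow [PseudoEMetricSpace Ω]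
    [OpensMeasurableSpace Ω] [MeasurableSingletonClass Ω] {q : Fin m × Bool → Ω}
    (hq : Function.Injective q) {ε : ℝ≥0∞} (hsep : ∀ u v, u ≠ v → ε ≤ edist (q u) (q v))
    {r : ℝ} (hr : 0 ≤ r) (hm : m ≠ 0) (hδ₀ : 0 ≤ δ) (hδ₁ : δ ≤ 1) (τ : Fin m → Bool)
    (Q : Measure Ω) [IsProbabilityMeasure Q] :
    (ε / 2) ^ r * ∑ i, pairLoss q (ε / 2) (cubeMeasure q δ τ) Q i
      ≤ 2 * wassersteinPow r (cubeMeasure q δ τ) Q := by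
  have hmass : ∑ u, cubeMeasure q δ τ {q u} = 1 := by
    simp only [cubeMeasure_singleton hq, sum_ofReal_cubeWeight hm hδ₀ hδ₁]
  simpa only [pairLoss, Fintype.sum_prod_type] using
    rpow_mul_sum_ennrDiff_le_two_mul_wassersteinPow hq hsep hr _ Q hmass

lemma ofReal_div_le_lintegral_pairLoss_add [PseudoEMetricSpace Ω] [OpensMeasurableSpace Ω]
    [MeasurableSingletonClass Ω] {q : Fin m × Bool → Ω} (hq : Function.Injective q)
    (hm : m ≠ 0) (hδ₀ : 0 ≤ δ) (hδ₁ : δ ≤ 1) {n : ℕ} (hδn : 4 * n * δ ^ 2 ≤ m)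
    {est : (Fin n → Ω) → Measure Ω} (hest : Measurable est) (ρ : ℝ≥0∞) (τ : Fin m → Bool)
    (i : Fin m) :
    ENNReal.ofReal (δ / (2 * m))
      ≤ ∫⁻ x, pairLoss q ρ (cubeMeasure q δ τ) (est x) i
          ∂(Measure.pi fun _ => cubeMeasure q δ τ)
        + ∫⁻ x, pairLoss q ρ (cubeMeasure q δ (Function.update τ i (!τ i))) (est x) i
          ∂(Measure.pi fun _ => cubeMeasure q δ (Function.update τ i (!τ i))) := by
  have hpi : ∀ σ, Measure.pi (fun _ : Fin n => cubeMeasure q δ σ)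
      = ∑ f : Fin n → Fin m × Bool,
          (∏ j, ENNReal.ofReal (cubeWeight m δ σ (f j))) • Measure.dirac (q ∘ f) :=
    fun σ => pi_sum_smul_dirac n q _ (sum_ofReal_cubeWeight hm hδ₀ hδ₁ σ)
  have hoverlap : ENNReal.ofReal (1 / 4) ≤ ∑ f : Fin n → Fin m × Bool,
      min (∏ j, ENNReal.ofReal (cubeWeight m δ τ (f j)))
        (∏ j, ENNReal.ofReal (cubeWeight m δ (Function.update τ i (!τ i)) (f j))) := by
    have hw := cubeWeight_nonneg hδ₀ hδ₁ (m := m)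
    simp_rw [← ofReal_prod_of_nonneg fun j _ => hw _ _, ← ofReal_min]
    rw [← ofReal_sum_of_nonneg fun f _ => le_min (Finset.prod_nonneg fun j _ => hw _ _)
      (Finset.prod_nonneg fun j _ => hw _ _)]
    exact ofReal_le_ofReal (one_fourth_le_sum_min_prod_cubeWeight hm hδ₀ hδ₁ hδn τ i)
  rw [hpi, hpi]
  calc ENNReal.ofReal (δ / (2 * m)) = ENNReal.ofReal (2 * δ / m) * ENNReal.ofReal (1 / 4) := by
        rw [← ofReal_mul (by positivity)]
        congr 1
        ring
    _ ≤ _ := by gcongr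
    _ ≤ _ := mul_sum_min_le_lintegral_add_lintegral _ _ _ (measurable_pairLoss_comp hest q ρ _ i)
        (measurable_pairLoss_comp hest q ρ _ i)
        fun x => ofReal_two_mul_div_le_pairLoss_add hq hδ₀ hδ₁ ρ (by simp) (est x)

end HypercubeMeasures

theorem le_iSup_lintegral_wassersteinPow_of_cube {Ω : Type*} [PseudoEMetricSpace Ω]
    [MeasurableSpace Ω] [OpensMeasurableSpace Ω] [MeasurableSingletonClass Ω] {m : ℕ}
    {q : Fin m × Bool → Ω} (hq : Function.Injective q) {ε : ℝ≥0∞}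
    (hsep : ∀ u v, u ≠ v → ε ≤ edist (q u) (q v)) {r : ℝ} (hr : 0 ≤ r) (hm : m ≠ 0) {δ : ℝ}
    (hδ₀ : 0 ≤ δ) (hδ₁ : δ ≤ 1) {n : ℕ} (hδn : 4 * n * δ ^ 2 ≤ m)
    {est : (Fin n → Ω) → Measure Ω} (hest : Measurable est)
    (hprob : ∀ x, IsProbabilityMeasure (est x)) :
    (ε / 2) ^ r * ENNReal.ofReal (δ / 8)
      ≤ ⨆ (P : Measure Ω) (_ : IsProbabilityMeasure P),
          ∫⁻ x, wassersteinPow r P (est x) ∂(Measure.pi fun _ : Fin n => P) := by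
  set R := ⨆ (P : Measure Ω) (_ : IsProbabilityMeasure P),
    ∫⁻ x, wassersteinPow r P (est x) ∂(Measure.pi fun _ : Fin n => P)
  set I : Fin m → (Fin m → Bool) → ℝ≥0∞ := fun i τ => (ε / 2) ^ r *
    ∫⁻ x, pairLoss q (ε / 2) (cubeMeasure q δ τ) (est x) i ∂(Measure.pi fun _ => cubeMeasure q δ τ)
  have hpair : ∀ i τ, (ε / 2) ^ r * ENNReal.ofReal (δ / (2 * m))
      ≤ I i τ + I i (Function.update τ i (!τ i)) := fun i τ => by
    simp only [I, ← mul_add]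
    gcongr
    exact ofReal_div_le_lintegral_pairLoss_add hq hm hδ₀ hδ₁ hδn hest _ τ i
  have hrisk : ∀ τ, ∑ i, I i τ ≤ 2 * R := fun τ => by
    have := isProbabilityMeasure_cubeMeasure hm hδ₀ hδ₁ q τ
    calc ∑ i, I i τ = ∫⁻ x, (ε / 2) ^ r * ∑ i, pairLoss q (ε / 2) (cubeMeasure q δ τ) (est x) i
          ∂(Measure.pi fun _ => cubeMeasure q δ τ) := by
          rw [lintegral_const_mul _ (Finset.measurable_sum _ fun i _ =>
            measurable_pairLoss_comp hest q _ _ i),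
            lintegral_finsetSum _ fun i _ => measurable_pairLoss_comp hest q _ _ i,
            Finset.mul_sum]
      _ ≤ ∫⁻ x, 2 * wassersteinPow r (cubeMeasure q δ τ) (est x)
          ∂(Measure.pi fun _ => cubeMeasure q δ τ) := lintegral_mono fun x =>
          have := hprob x
          rpow_mul_sum_pairLoss_le_two_mul_wassersteinPow hq hsep hr hm hδ₀ hδ₁ τ (est x)
      _ = 2 * ∫⁻ x, wassersteinPow r (cubeMeasure q δ τ) (est x)
          ∂(Measure.pi fun _ => cubeMeasure q δ τ) := lintegral_const_mul' _ _ ofNat_ne_top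
      _ ≤ 2 * R := by gcongr; exact le_iSup₂_of_le (cubeMeasure q δ τ) this le_rfl
  have hm4 : (m : ℝ≥0∞) * ENNReal.ofReal (δ / (2 * m)) = 4 * ENNReal.ofReal (δ / 8) := by
    rw [← ofReal_natCast, ← ofReal_mul (by positivity), ← ofReal_ofNat 4,
      ← ofReal_mul (by norm_num)]
    congr 1
    field_simp
    ring
  have h := assouad_hypercube I hpair hrisk
  rw [mul_left_comm, hm4] at h
  refine (ENNReal.mul_le_mul_iff_right four_ne_zero ofNat_ne_top).mp ?_
  convert h using 1 <;> ring

lemma Set.Finite.exists_injective_mem_of_card_le {α Ω : Type*} [Fintype α] {S : Set Ω}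
    (hS : S.Finite) (h : Fintype.card α ≤ S.ncard) :
    ∃ q : α → Ω, Function.Injective q ∧ ∀ a, q a ∈ S := by
  have := hS.fintype
  obtain ⟨e⟩ := Function.Embedding.nonempty_of_card_le (α := α) (β := S)
    (by rwa [← Nat.card_coe_set_eq, Nat.card_eq_fintype_card] at h)
  exact ⟨Subtype.val ∘ e, Subtype.val_injective.comp e.injective, fun a => (e a).2⟩

lemma ofReal_div_two_rpow_mul_rpow_mul_ofReal (ε : ℝ≥0∞) {r : ℝ} (hr : 0 ≤ r) {a b : ℝ}
    (ha : 0 ≤ a) :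
    ENNReal.ofReal (a / 2 ^ r) * ε ^ r * ENNReal.ofReal b
      = (ε / 2) ^ r * ENNReal.ofReal (a * b) := by
  rw [ENNReal.div_rpow_of_nonneg _ _ hr, ofReal_mul ha, ofReal_div_of_pos (by positivity),
    ← ofReal_rpow_of_pos two_pos, ofReal_ofNat, ENNReal.div_eq_inv_mul, ENNReal.div_eq_inv_mul]
  ring

lemma three_log_two_div_mul_sqrt_le_one {n k : ℕ} (hk : k ≤ 32 * n) :
    3 * Real.log 2 / 512 * √(((k : ℝ) - 1) / n) ≤ 1 := by
  have hs : √(((k : ℝ) - 1) / n) ≤ 6 := by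
    rw [Real.sqrt_le_left (by norm_num)]
    refine div_le_of_le_mul₀ n.cast_nonneg (by norm_num) ?_
    have : (k : ℝ) ≤ 32 * n := by exact_mod_cast hk
    nlinarith [(n.cast_nonneg : (0 : ℝ) ≤ n)]
  calc 3 * Real.log 2 / 512 * √(((k : ℝ) - 1) / n) ≤ 3 * 1 / 512 * 6 := by
        gcongr
        exact Real.log_two_lt_d9.le.trans (by norm_num)
    _ ≤ 1 := by norm_num

lemma four_mul_sq_three_log_two_div_mul_sqrt_le {n k : ℕ} (hk : 1 ≤ k) :
    4 * n * (3 * Real.log 2 / 512 * √(((k : ℝ) - 1) / n)) ^ 2 ≤ (k / 2 : ℕ) := by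
  rcases Nat.eq_zero_or_pos n with rfl | hn
  · simp
  have hkm : (k : ℝ) - 1 ≤ 2 * (k / 2 : ℕ) := by
    have := (Nat.cast_le (α := ℝ)).mpr (show k ≤ 2 * (k / 2) + 1 by omega)
    push_cast at this
    linarith
  have hk1 : (1 : ℝ) ≤ k := by exact_mod_cast hk
  calc 4 * n * (3 * Real.log 2 / 512 * √(((k : ℝ) - 1) / n)) ^ 2
      = 4 * (3 * Real.log 2 / 512) ^ 2 * ((k : ℝ) - 1) := by
        rw [mul_pow, Real.sq_sqrt (div_nonneg (by linarith) n.cast_nonneg)]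
        field_simp
    _ ≤ 8 * (3 * Real.log 2 / 512) ^ 2 * (k / 2 : ℕ) := by nlinarith
    _ ≤ 1 * (k / 2 : ℕ) := by gcongr; nlinarith [Real.log_two_lt_d9, Real.log_two_gt_d9]
    _ = (k / 2 : ℕ) := one_mul _

theorem stmt_2_general {Ω : Type*} [MetricSpace Ω] [MeasurableSpace Ω] [BorelSpace Ω]
    (r : ℝ) (hr : 1 ≤ r) (n : ℕ)
    (k : ℕ) (hk : k ≤ 32 * n)
    (S : Set Ω) (hScard : S.ncard = k)
    (est : (Fin n → Ω) → MeasureTheory.Measure Ω) (hmeas : Measurable est)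
    (hprob : ∀ x, MeasureTheory.IsProbabilityMeasure (est x)) :
    ENNReal.ofReal (3 * Real.log 2 / 2 ^ (r + 12)) * eSep S ^ r
        * ENNReal.ofReal (Real.sqrt (((k : ℝ) - 1) / n))
      ≤ ⨆ (P : MeasureTheory.Measure Ω) (_ : MeasureTheory.IsProbabilityMeasure P),
          ∫⁻ x, wassersteinPow r P (est x)
            ∂(MeasureTheory.Measure.pi fun _ : Fin n => P) := by
  rcases lt_or_ge k 2 with hk2 | hk2
  · have hs : √(((k : ℝ) - 1) / n) = 0 := Real.sqrt_eq_zero'.mpr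
      (div_nonpos_of_nonpos_of_nonneg (sub_nonpos.mpr (by exact_mod_cast Nat.lt_succ_iff.mp hk2))
        n.cast_nonneg)
    simp [hs]
  obtain ⟨q, hq, hqS⟩ := (Set.finite_of_ncard_ne_zero (s := S) (by omega))
    |>.exists_injective_mem_of_card_le (α := Fin (k / 2) × Bool) (by simp; omega)
  set s := √(((k : ℝ) - 1) / n)
  have h2r : (2 : ℝ) ^ (r + 12) = 4096 * 2 ^ r := by rw [Real.rpow_add two_pos]; norm_num; ring
  calc _ = (eSep S / 2) ^ r * ENNReal.ofReal (3 * Real.log 2 / 512 * s / 8) := by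
        rw [h2r, ← div_div, ofReal_div_two_rpow_mul_rpow_mul_ofReal _ (by linarith) (by positivity)]
        congr 2
        ring
    _ ≤ _ := le_iSup_lintegral_wassersteinPow_of_cube hq
        (fun u v huv => eSep_le_edist (hqS u) (hqS v) (hq.ne huv)) (by linarith) (by omega)
        (by positivity) (three_log_two_div_mul_sqrt_le_one hk)
        (four_mul_sq_three_log_two_div_mul_sqrt_le (by omega)) hmeas hprob

/-- Theorem 3: minimax lower bound for distribution estimation in `W_r^r` loss, in terms
of the separation of a `k`-point subset of the sample space. -/
theorem stmt_2 {Ω : Type*} [MetricSpace Ω] [MeasurableSpace Ω] [BorelSpace Ω]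
    (r : ℝ) (hr : 1 ≤ r) (n : ℕ) (hn : 0 < n)
    (k : ℕ) (hk1 : 1 ≤ k) (hk : k ≤ 32 * n)
    (S : Set Ω) (hSfin : S.Finite) (hScard : S.ncard = k)
    (est : (Fin n → Ω) → MeasureTheory.Measure Ω) (hmeas : Measurable est)
    (hprob : ∀ x, MeasureTheory.IsProbabilityMeasure (est x)) :
    ENNReal.ofReal (3 * Real.log 2 / 2 ^ (r + 12)) * eSep S ^ r
        * ENNReal.ofReal (Real.sqrt (((k : ℝ) - 1) / n))
      ≤ ⨆ (P : MeasureTheory.Measure Ω) (_ : MeasureTheory.IsProbabilityMeasure P),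
          ∫⁻ x, wassersteinPow r P (est x)
            ∂(MeasureTheory.Measure.pi fun _ : Fin n => P) :=
  stmt_2_general r hr n k hk S hScard est hmeas hprob
end

section
/- Let (Ω,ρ) be a metric space and let 𝒮 be a countable Borel partition of Ω. If P and Q are Borel probability measures on Ω such that P(S) = Q(S) for every S ∈ 𝒮, then for every r ∈ [1,∞), W_r(P,Q) ≤ Res(𝒮). -/
open MeasureTheory ENNReal

/-- Lemma 1: if two probability measures agree on a countable Borel partition, their
`r`-Wasserstein distance is at most the resolution of the partition. -/
theorem stmt_3 {Ω : Type*} [MetricSpace Ω] [MeasurableSpace Ω] [BorelSpace Ω]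
    (𝒮 : Set (Set Ω)) (hpart : IsBorelPartitionOf 𝒮 Set.univ) (hcount : 𝒮.Countable)
    (P Q : MeasureTheory.Measure Ω)
    [MeasureTheory.IsProbabilityMeasure P] [MeasureTheory.IsProbabilityMeasure Q]
    (hPQ : ∀ S ∈ 𝒮, P S = Q S) (r : ℝ) (hr : 1 ≤ r) :
    wasserstein r P Q ≤ partRes 𝒮 := by
  classical
  obtain ⟨hmeas, hcover, hdisj⟩ := hpart
  haveI : Countable ↥𝒮 := hcount.to_subtype
  have hrpos : (0:ℝ) < r := lt_of_lt_of_le one_pos hr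
  -- the union over the subtype is univ
  have hU : (⋃ S : ↥𝒮, (S : Set Ω)) = Set.univ := by
    rw [← hcover, Set.sUnion_eq_iUnion]
  have hdisj' : Pairwise (Function.onFun Disjoint fun S : ↥𝒮 => (S : Set Ω)) := by
    intro a b hab
    exact hdisj a.2 b.2 (fun h => hab (Subtype.ext h))
  have hmeas' : ∀ S : ↥𝒮, MeasurableSet (S : Set Ω) := fun S => hmeas S S.2
  -- sum of restrictions equals the measure
  have hsumR : ∀ (μ : Measure Ω), Measure.sum (fun S : ↥𝒮 => μ.restrict S) = μ := by
    intro μ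
    ext s hs
    rw [Measure.sum_apply _ hs]
    simp_rw [Measure.restrict_apply hs]
    rw [← measure_iUnion (fun a b hab => ((hdisj' hab).inter_right' s).inter_left' s)
      (fun S => hs.inter (hmeas' S)), ← Set.inter_iUnion, hU, Set.inter_univ]
  -- the coupling
  set ν : ↥𝒮 → Measure (Ω × Ω) :=
    fun S => (P S)⁻¹ • ((P.restrict S).prod (Q.restrict S)) with hν
  set μ : Measure (Ω × Ω) := Measure.sum ν with hμ
  have hPS_ne_top : ∀ S : ↥𝒮, P (S : Set Ω) ≠ ∞ := fun S => measure_ne_top P _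
  have hfst : ∀ S : ↥𝒮, (ν S).map Prod.fst = P.restrict S := by
    intro S
    rw [hν]
    rcases eq_or_ne (P (S : Set Ω)) 0 with h0 | h0
    · have : P.restrict (S : Set Ω) = 0 := Measure.restrict_eq_zero.mpr h0
      simp [this]
    · rw [Measure.map_smul, Measure.map_fst_prod, Measure.restrict_apply_univ,
        ← hPQ S S.2, smul_smul, ENNReal.inv_mul_cancel h0 (hPS_ne_top S), one_smul]
  have hsnd : ∀ S : ↥𝒮, (ν S).map Prod.snd = Q.restrict S := by
    intro S
    rw [hν]
    rcases eq_or_ne (P (S : Set Ω)) 0 with h0 | h0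
    · have hQ0 : Q.restrict (S : Set Ω) = 0 :=
        Measure.restrict_eq_zero.mpr (by rw [← hPQ S S.2]; exact h0)
      have hP0 : P.restrict (S : Set Ω) = 0 := Measure.restrict_eq_zero.mpr h0
      simp [hQ0, hP0]
    · rw [Measure.map_smul, Measure.map_snd_prod, Measure.restrict_apply_univ,
        smul_smul, ENNReal.inv_mul_cancel h0 (hPS_ne_top S), one_smul]
  have hcoup : μ ∈ couplings P Q := by
    constructor
    · rw [hμ, Measure.map_sum measurable_fst.aemeasurable]
      simp_rw [hfst]
      exact hsumR P
    · rw [hμ, Measure.map_sum measurable_snd.aemeasurable]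
      simp_rw [hsnd]
      exact hsumR Q
  -- bound the cost of the coupling
  have hcost : ∫⁻ p : Ω × Ω, edist p.1 p.2 ^ r ∂μ ≤ partRes 𝒮 ^ r := by
    rw [hμ, MeasureTheory.lintegral_sum_measure]
    have hbound : ∀ S : ↥𝒮,
        ∫⁻ p : Ω × Ω, edist p.1 p.2 ^ r ∂(ν S) ≤ partRes 𝒮 ^ r * P (S : Set Ω) := by
      intro S
      rw [hν]
      simp only [MeasureTheory.lintegral_smul_measure]
      rcases eq_or_ne (P (S : Set Ω)) 0 with h0 | h0
      · have : P.restrict (S : Set Ω) = 0 := Measure.restrict_eq_zero.mpr h0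
        simp [this]
      · have hae : ∀ᵐ p : Ω × Ω ∂((P.restrict S).prod (Q.restrict S)),
            edist p.1 p.2 ^ r ≤ partRes 𝒮 ^ r := by
          rw [Measure.prod_restrict]
          filter_upwards [MeasureTheory.ae_restrict_mem ((hmeas' S).prod (hmeas' S))] with p hp
          have hd : edist p.1 p.2 ≤ EMetric.diam (S : Set Ω) :=
            EMetric.edist_le_diam_of_mem hp.1 hp.2
          have hd2 : edist p.1 p.2 ≤ partRes 𝒮 :=
            hd.trans (le_iSup₂ (f := fun T (_ : T ∈ 𝒮) => EMetric.diam T) (S : Set Ω) S.2)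
          exact ENNReal.rpow_le_rpow hd2 (le_of_lt hrpos)
        calc (P (S : Set Ω))⁻¹ * ∫⁻ p : Ω × Ω, edist p.1 p.2 ^ r
                ∂((P.restrict S).prod (Q.restrict S))
            ≤ (P (S : Set Ω))⁻¹ * ∫⁻ _ : Ω × Ω, partRes 𝒮 ^ r
                ∂((P.restrict S).prod (Q.restrict S)) := by
              exact mul_le_mul_right (MeasureTheory.lintegral_mono_ae hae) _
          _ = (P (S : Set Ω))⁻¹ * (partRes 𝒮 ^ r * (P (S:Set Ω) * Q (S:Set Ω))) := by
              rw [MeasureTheory.lintegral_const, ← Set.univ_prod_univ, Measure.prod_prod,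
                Measure.restrict_apply_univ, Measure.restrict_apply_univ]
          _ = partRes 𝒮 ^ r * ((P (S : Set Ω))⁻¹ * P (S:Set Ω) * Q (S:Set Ω)) := by ring
          _ = partRes 𝒮 ^ r * Q (S : Set Ω) := by
              rw [ENNReal.inv_mul_cancel h0 (hPS_ne_top S), one_mul]
          _ = partRes 𝒮 ^ r * P (S : Set Ω) := by rw [hPQ S S.2]
    calc ∑' S : ↥𝒮, ∫⁻ p : Ω × Ω, edist p.1 p.2 ^ r ∂(ν S)
        ≤ ∑' S : ↥𝒮, partRes 𝒮 ^ r * P (S : Set Ω) := ENNReal.tsum_le_tsum hbound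
      _ = partRes 𝒮 ^ r * ∑' S : ↥𝒮, P (S : Set Ω) := ENNReal.tsum_mul_left
      _ = partRes 𝒮 ^ r * P Set.univ := by
          rw [← hU, measure_iUnion hdisj' hmeas']
      _ = partRes 𝒮 ^ r := by rw [measure_univ, mul_one]
  -- conclude
  have hW : wassersteinPow r P Q ≤ partRes 𝒮 ^ r :=
    le_trans (iInf₂_le μ hcoup) hcost
  have : wasserstein r P Q ≤ (partRes 𝒮 ^ r) ^ (1/r) :=
    ENNReal.rpow_le_rpow hW (by positivity)
  rwa [← ENNReal.rpow_mul, mul_one_div, div_self (ne_of_gt hrpos), ENNReal.rpow_one] at this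
end

section
/- Let (Ω,ρ) be a metric space, r ∈ [1,∞), x₀ ∈ Ω, and let {w_k}_{k≥0} be a non-decreasing real sequence with w_0 = 0 and w_k → ∞. For each k ≥ 0 set B_k := {x ∈ Ω : w_k ≤ ρ(x₀,x) < w_{k+1}}. Then there exists a constant C_r depending only on r such that for all Borel probability measures P and Q on Ω, W_r^r(P,Q) ≤ C_r · ∑_{k=0}^∞ [ min{P(B_k), Q(B_k)} · W_r^r(P_{B_k}, Q_{B_k}) + w_{k+1}^r · |P(B_k) − Q(B_k)| ], where for a Borel set A with P(A) > 0, P_A denotes the conditional measure P_A(E) := P(E ∩ A)/P(A), and the term min{P(B_k),Q(B_k)} · W_r^r(P_{B_k},Q_{B_k}) is interpreted as 0 when P(B_k) = 0 or Q(B_k) = 0. -/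
open MeasureTheory ENNReal

/-!
On each shell `B k` the common mass `min (P (B k)) (Q (B k))` is transported by a near-optimal
coupling of the conditional laws. What is left of `P` and of `Q` has the same total mass and is
transported by the normalised product measure. Since
`ρ(x, y)^r ≤ 2^(r-1) (ρ(x₀, x)^r + ρ(x₀, y)^r)`, its cost is at most `2^(r-1)` times the `r`-th
moments of the leftovers about `x₀`; the two leftovers on `B k` have total mass
`|P(B k) - Q(B k)|` and live at distance `< w (k+1)` from `x₀`. The transport cost is subadditive
over sums of measures, so `C_r = 2^(r-1)` works.
-/

open ProbabilityTheory Set Filter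
open scoped Function

section Couplings

variable {Ω : Type*} [MeasurableSpace Ω]

lemma smul_mem_couplings {P Q : Measure Ω} {μ : Measure (Ω × Ω)} (hμ : μ ∈ couplings P Q)
    (c : ℝ≥0∞) : c • μ ∈ couplings (c • P) (c • Q) :=
  ⟨by rw [Measure.map_smul, hμ.1], by rw [Measure.map_smul, hμ.2]⟩

lemma sum_mem_couplings {ι : Type*} {P Q : ι → Measure Ω} {μ : ι → Measure (Ω × Ω)}
    (hμ : ∀ i, μ i ∈ couplings (P i) (Q i)) :
    Measure.sum μ ∈ couplings (Measure.sum P) (Measure.sum Q) :=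
  ⟨by simp_rw [Measure.map_sum measurable_fst.aemeasurable, fun i => (hμ i).1],
    by simp_rw [Measure.map_sum measurable_snd.aemeasurable, fun i => (hμ i).2]⟩

lemma couplings_nonempty_of_measure_univ_eq {P Q : Measure Ω} [IsFiniteMeasure P]
    [IsFiniteMeasure Q] (h : P univ = Q univ) : (couplings P Q).Nonempty := by
  by_cases h0 : P univ = 0
  · have hQ : Q univ = 0 := h ▸ h0
    rw [Measure.measure_univ_eq_zero.1 h0, Measure.measure_univ_eq_zero.1 hQ]
    exact ⟨0, by simp [couplings]⟩
  · have hinv : (P univ)⁻¹ * P univ = 1 := ENNReal.inv_mul_cancel h0 (measure_ne_top P univ)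
    refine ⟨(P univ)⁻¹ • P.prod Q, ?_, ?_⟩
    · rw [Measure.map_smul, Measure.map_fst_prod, ← h, smul_smul, hinv, one_smul]
    · rw [Measure.map_smul, Measure.map_snd_prod, smul_smul, hinv, one_smul]

end Couplings

section Wasserstein

variable {Ω : Type*} [MeasurableSpace Ω] [PseudoEMetricSpace Ω] {r : ℝ}

lemma wassersteinPow_le_lintegral {P Q : Measure Ω} {μ : Measure (Ω × Ω)}
    (hμ : μ ∈ couplings P Q) : wassersteinPow r P Q ≤ ∫⁻ p, edist p.1 p.2 ^ r ∂μ :=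
  iInf₂_le μ hμ

lemma exists_mem_couplings_lintegral_lt {P Q : Measure Ω} {a : ℝ≥0∞}
    (h : wassersteinPow r P Q < a) : ∃ μ ∈ couplings P Q, ∫⁻ p, edist p.1 p.2 ^ r ∂μ < a := by
  simpa only [wassersteinPow, iInf_lt_iff, exists_prop] using h

lemma wassersteinPow_smul_le (P Q : Measure Ω) {c : ℝ≥0∞} (hc : c ≠ ∞) :
    wassersteinPow r (c • P) (c • Q) ≤ c * wassersteinPow r P Q := by
  rcases eq_or_ne c 0 with rfl | hc0
  · simpa using wassersteinPow_le_lintegral (r := r) (P := 0) (Q := 0) (μ := 0) ⟨by simp, by simp⟩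
  simp_rw [wassersteinPow, ENNReal.mul_iInf_of_ne hc0 hc]
  refine le_iInf₂ fun μ hμ => (wassersteinPow_le_lintegral (smul_mem_couplings hμ c)).trans_eq ?_
  rw [lintegral_smul_measure, smul_eq_mul]

lemma wassersteinPow_sum_le {ι : Type*} [Countable ι] (P Q : ι → Measure Ω) :
    wassersteinPow r (Measure.sum P) (Measure.sum Q) ≤ ∑' i, wassersteinPow r (P i) (Q i) := by
  refine ENNReal.le_of_forall_pos_le_add fun ε hε hlt => ?_
  obtain ⟨δ, hδ, hδε⟩ := ENNReal.exists_pos_sum_of_countable' (ENNReal.coe_ne_zero.2 hε.ne') ι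
  have hfin : ∀ i, wassersteinPow r (P i) (Q i) ≠ ∞ := fun i =>
    ne_top_of_le_ne_top hlt.ne (ENNReal.le_tsum i)
  choose μ hμ hcost using fun i =>
    exists_mem_couplings_lintegral_lt (ENNReal.lt_add_right (hfin i) (hδ i).ne')
  calc wassersteinPow r (Measure.sum P) (Measure.sum Q)
      ≤ ∫⁻ p, edist p.1 p.2 ^ r ∂Measure.sum μ := wassersteinPow_le_lintegral (sum_mem_couplings hμ)
    _ = ∑' i, ∫⁻ p, edist p.1 p.2 ^ r ∂μ i := lintegral_sum_measure _ _
    _ ≤ ∑' i, (wassersteinPow r (P i) (Q i) + δ i) := ENNReal.tsum_le_tsum fun i => (hcost i).le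
    _ ≤ ∑' i, wassersteinPow r (P i) (Q i) + ε := by rw [ENNReal.tsum_add]; gcongr

lemma wassersteinPow_add_le (P₁ P₂ Q₁ Q₂ : Measure Ω) :
    wassersteinPow r (P₁ + P₂) (Q₁ + Q₂) ≤ wassersteinPow r P₁ Q₁ + wassersteinPow r P₂ Q₂ := by
  simpa [Measure.sum_bool, tsum_bool, add_comm] using
    wassersteinPow_sum_le (r := r) (fun b => bif b then P₁ else P₂) (fun b => bif b then Q₁ else Q₂)

variable [OpensMeasurableSpace Ω]

lemma lintegral_edist_rpow_le_of_mem_couplings (hr : 1 ≤ r) (x₀ : Ω) {P Q : Measure Ω}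
    {μ : Measure (Ω × Ω)} (hμ : μ ∈ couplings P Q) :
    ∫⁻ p, edist p.1 p.2 ^ r ∂μ
      ≤ 2 ^ (r - 1) * (∫⁻ x, edist x₀ x ^ r ∂P + ∫⁻ y, edist x₀ y ^ r ∂Q) := by
  have hf : Measurable fun x => edist x₀ x ^ r :=
    (continuous_const.edist continuous_id).measurable.pow_const r
  have hpoint : ∀ p : Ω × Ω,
      edist p.1 p.2 ^ r ≤ 2 ^ (r - 1) * (edist x₀ p.1 ^ r + edist x₀ p.2 ^ r) := fun p =>
    calc edist p.1 p.2 ^ r ≤ (edist x₀ p.1 + edist x₀ p.2) ^ r :=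
          ENNReal.rpow_le_rpow (edist_comm x₀ p.1 ▸ edist_triangle _ _ _) (by linarith)
      _ ≤ _ := ENNReal.rpow_add_le_mul_rpow_add_rpow _ _ hr
  calc ∫⁻ p, edist p.1 p.2 ^ r ∂μ
      ≤ ∫⁻ p, 2 ^ (r - 1) * (edist x₀ p.1 ^ r + edist x₀ p.2 ^ r) ∂μ := lintegral_mono hpoint
    _ = 2 ^ (r - 1) * (∫⁻ p, edist x₀ p.1 ^ r ∂μ + ∫⁻ p, edist x₀ p.2 ^ r ∂μ) := by
      rw [lintegral_const_mul' _ _ (ENNReal.rpow_ne_top_of_nonneg (by linarith) ofNat_ne_top),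
        lintegral_add_left (f := fun p : Ω × Ω => edist x₀ p.1 ^ r) (hf.comp measurable_fst)]
    _ = _ := by
      rw [← hμ.1, ← hμ.2, lintegral_map hf measurable_fst, lintegral_map hf measurable_snd]

lemma wassersteinPow_le_of_measure_univ_eq (hr : 1 ≤ r) (x₀ : Ω) {P Q : Measure Ω}
    [IsFiniteMeasure P] [IsFiniteMeasure Q] (h : P univ = Q univ) :
    wassersteinPow r P Q ≤ 2 ^ (r - 1) * (∫⁻ x, edist x₀ x ^ r ∂P + ∫⁻ y, edist x₀ y ^ r ∂Q) :=
  let ⟨_, hμ⟩ := couplings_nonempty_of_measure_univ_eq h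
  (wassersteinPow_le_lintegral hμ).trans (lintegral_edist_rpow_le_of_mem_couplings hr x₀ hμ)

end Wasserstein

section Conditioning

variable {Ω : Type*} [MeasurableSpace Ω] {μ : Measure Ω}

lemma lintegral_cond_le {s : Set Ω} {f : Ω → ℝ≥0∞} {c : ℝ≥0∞} (hf : ∀ x ∈ s, f x ≤ c) :
    ∫⁻ x, f x ∂μ[|s] ≤ c :=
  calc ∫⁻ x, f x ∂μ[|s] = (μ s)⁻¹ * ∫⁻ x in s, f x ∂μ := by
        rw [ProbabilityTheory.cond, lintegral_smul_measure, smul_eq_mul]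
    _ ≤ (μ s)⁻¹ * (c * μ s) := by
        gcongr
        exact (setLIntegral_mono measurable_const hf).trans_eq (setLIntegral_const s c)
    _ = c * ((μ s)⁻¹ * μ s) := by ring
    _ ≤ c := mul_le_of_le_one_right' (ENNReal.inv_mul_le_one _)

lemma lintegral_sum_smul_cond_le {ι : Type*} {s : ι → Set Ω} {f : Ω → ℝ≥0∞} {c : ι → ℝ≥0∞}
    (hf : ∀ i, ∀ x ∈ s i, f x ≤ c i) (a : ι → ℝ≥0∞) :
    ∫⁻ x, f x ∂Measure.sum (fun i => a i • μ[|s i]) ≤ ∑' i, a i * c i := by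
  rw [lintegral_sum_measure]
  refine ENNReal.tsum_le_tsum fun i => ?_
  rw [lintegral_smul_measure, smul_eq_mul]
  gcongr
  exact lintegral_cond_le (hf i)

variable [IsFiniteMeasure μ]

lemma measure_smul_cond (s : Set Ω) : μ s • μ[|s] = μ.restrict s := by
  rw [ProbabilityTheory.cond, smul_smul]
  rcases eq_or_ne (μ s) 0 with h | h
  · simp [h, Measure.restrict_eq_zero.2 h]
  · rw [ENNReal.mul_inv_cancel h (measure_ne_top μ s), one_smul]

lemma mul_cond_univ_of_le {s : Set Ω} {a : ℝ≥0∞} (ha : a ≤ μ s) : a * μ[|s] univ = a := by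
  rcases eq_or_ne (μ s) 0 with h | h
  · rw [nonpos_iff_eq_zero.1 (ha.trans_eq h), zero_mul]
  · have := cond_isProbabilityMeasure (μ := μ) h
    rw [measure_univ, mul_one]

variable {ι : Type*} {s : ι → Set Ω} {a : ι → ℝ≥0∞}

lemma sum_smul_cond_apply_univ (ha : ∀ i, a i ≤ μ (s i)) :
    Measure.sum (fun i => a i • μ[|s i]) univ = ∑' i, a i := by
  simp only [Measure.sum_apply _ MeasurableSet.univ, Measure.smul_apply, smul_eq_mul,
    mul_cond_univ_of_le (ha _)]

lemma sum_smul_cond_add_sum_tsub_smul_cond [Countable ι] (hs : ∀ i, MeasurableSet (s i))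
    (hd : Pairwise (Disjoint on s)) (hU : ⋃ i, s i = univ) (ha : ∀ i, a i ≤ μ (s i)) :
    Measure.sum (fun i => a i • μ[|s i]) + Measure.sum (fun i => (μ (s i) - a i) • μ[|s i])
      = μ := by
  simp_rw [Measure.sum_add_sum, ← add_smul, add_tsub_cancel_of_le (ha _), measure_smul_cond]
  rw [← Measure.restrict_iUnion hd hs, hU, Measure.restrict_univ]

end Conditioning

lemma ennrDiff_eq_tsub_min_add_tsub_min (a b : ℝ≥0∞) :
    ennrDiff a b = (a - min a b) + (b - min a b) := by
  rcases le_total a b with h | h <;> simp [ennrDiff, h, tsub_eq_zero_of_le]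

lemma edist_rpow_le_ofReal_rpow {Ω : Type*} [PseudoMetricSpace Ω] {x y : Ω} {t r : ℝ}
    (h : dist x y ≤ t) (hr : 0 ≤ r) : edist x y ^ r ≤ ENNReal.ofReal (t ^ r) := by
  rw [edist_dist, ENNReal.ofReal_rpow_of_nonneg dist_nonneg hr]
  exact ENNReal.ofReal_le_ofReal (Real.rpow_le_rpow dist_nonneg h hr)

section Shells

variable {Ω : Type*} {w : ℕ → ℝ}

lemma pairwise_disjoint_preimage_Ico_succ (hw : Monotone w) (g : Ω → ℝ) :
    Pairwise (Disjoint on fun k => g ⁻¹' Ico (w k) (w (k + 1))) :=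
  hw.pairwise_disjoint_on_Ico_succ.mono fun _ _ h => h.preimage g

lemma iUnion_preimage_Ico_succ_eq_univ (hw : Monotone w) (hw0 : w 0 = 0)
    (hlim : Tendsto w atTop atTop) {g : Ω → ℝ} (hg : ∀ x, 0 ≤ g x) :
    ⋃ k, g ⁻¹' Ico (w k) (w (k + 1)) = univ := by
  have hIci : ⋃ k, Ico (w k) (w (k + 1)) = Ici (w 0) := by
    simpa [Order.succ_eq_add_one] using
      iUnion_Ico_map_succ_eq_Ici (fun k => hw (Nat.zero_le k)) (not_bddAbove_of_tendsto_atTop hlim)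
  rw [← preimage_iUnion, hIci, hw0, eq_univ_iff_forall]
  exact hg

end Shells

theorem wassersteinPow_le_of_partition {Ω : Type*} [MeasurableSpace Ω] [PseudoEMetricSpace Ω]
    [OpensMeasurableSpace Ω] {r : ℝ} (hr : 1 ≤ r) (x₀ : Ω) {ι : Type*} [Countable ι]
    {s : ι → Set Ω} (hs : ∀ i, MeasurableSet (s i)) (hd : Pairwise (Disjoint on s))
    (hU : ⋃ i, s i = univ) {c : ι → ℝ≥0∞} (hc : ∀ i, ∀ x ∈ s i, edist x₀ x ^ r ≤ c i)
    (P Q : Measure Ω) [IsProbabilityMeasure P] [IsProbabilityMeasure Q] :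
    wassersteinPow r P Q ≤ 2 ^ (r - 1) * ∑' i,
      (min (P (s i)) (Q (s i)) * wassersteinPow r P[|s i] Q[|s i]
        + c i * ennrDiff (P (s i)) (Q (s i))) := by
  set m := fun i => min (P (s i)) (Q (s i))
  have hmP : ∀ i, m i ≤ P (s i) := fun i => min_le_left _ _
  have hmQ : ∀ i, m i ≤ Q (s i) := fun i => min_le_right _ _
  set AP := Measure.sum fun i => m i • P[|s i]
  set AQ := Measure.sum fun i => m i • Q[|s i]
  set RP := Measure.sum fun i => (P (s i) - m i) • P[|s i]
  set RQ := Measure.sum fun i => (Q (s i) - m i) • Q[|s i]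
  have hP : AP + RP = P := sum_smul_cond_add_sum_tsub_smul_cond hs hd hU hmP
  have hQ : AQ + RQ = Q := sum_smul_cond_add_sum_tsub_smul_cond hs hd hU hmQ
  have : IsFiniteMeasure RP := isFiniteMeasure_of_le P (hP ▸ Measure.le_add_left le_rfl)
  have : IsFiniteMeasure RQ := isFiniteMeasure_of_le Q (hQ ▸ Measure.le_add_left le_rfl)
  -- `P` and `Q` have the same total mass, and so do their matched parts `AP` and `AQ`.
  have hmass : RP univ = RQ univ := by
    have hA : AP univ = AQ univ := by
      rw [sum_smul_cond_apply_univ hmP, sum_smul_cond_apply_univ hmQ]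
    have : IsFiniteMeasure AP := isFiniteMeasure_of_le P (hP ▸ Measure.le_add_right le_rfl)
    refine (ENNReal.add_right_inj (measure_ne_top AP univ)).1 ?_
    rw [← Measure.add_apply, hP, hA, ← Measure.add_apply, hQ, measure_univ, measure_univ]
  have hmatched : wassersteinPow r AP AQ ≤ ∑' i, m i * wassersteinPow r P[|s i] Q[|s i] :=
    (wassersteinPow_sum_le _ _).trans <| ENNReal.tsum_le_tsum fun i =>
      wassersteinPow_smul_le _ _ (ne_top_of_le_ne_top one_ne_top ((hmP i).trans prob_le_one))
  have hresidual : wassersteinPow r RP RQ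
      ≤ 2 ^ (r - 1) * ∑' i, c i * ennrDiff (P (s i)) (Q (s i)) := by
    refine (wassersteinPow_le_of_measure_univ_eq hr x₀ hmass).trans ?_
    gcongr
    refine (add_le_add (lintegral_sum_smul_cond_le hc _)
      (lintegral_sum_smul_cond_le hc _)).trans_eq ?_
    rw [← ENNReal.tsum_add]
    congr 1 with i
    rw [ennrDiff_eq_tsub_min_add_tsub_min, ← add_mul, mul_comm]
  have hC : 1 ≤ (2 : ℝ≥0∞) ^ (r - 1) := by
    simpa using ENNReal.rpow_le_rpow_of_exponent_le one_le_two (show 0 ≤ r - 1 by linarith)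
  calc wassersteinPow r P Q = wassersteinPow r (AP + RP) (AQ + RQ) := by rw [hP, hQ]
    _ ≤ wassersteinPow r AP AQ + wassersteinPow r RP RQ := wassersteinPow_add_le _ _ _ _
    _ ≤ 2 ^ (r - 1) * ∑' i, m i * wassersteinPow r P[|s i] Q[|s i]
          + 2 ^ (r - 1) * ∑' i, c i * ennrDiff (P (s i)) (Q (s i)) :=
        add_le_add (hmatched.trans (le_mul_of_one_le_left' hC)) hresidual
    _ = _ := by rw [ENNReal.tsum_add, mul_add]

/-- Lemma 5: decomposition of the Wasserstein distance over spherical shells. -/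
theorem stmt_7 {Ω : Type*} [MetricSpace Ω] [MeasurableSpace Ω] [BorelSpace Ω]
    (r : ℝ) (hr : 1 ≤ r) (x₀ : Ω)
    (w : ℕ → ℝ) (hw0 : w 0 = 0) (hwmono : Monotone w)
    (hwlim : Filter.Tendsto w Filter.atTop Filter.atTop)
    (B : ℕ → Set Ω) (hB : ∀ k, B k = {x : Ω | w k ≤ dist x₀ x ∧ dist x₀ x < w (k + 1)}) :
    ∃ C : ℝ≥0∞, 0 < C ∧ C ≠ ⊤ ∧
      ∀ P Q : MeasureTheory.Measure Ω,
        MeasureTheory.IsProbabilityMeasure P → MeasureTheory.IsProbabilityMeasure Q →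
        wassersteinPow r P Q
          ≤ C * ∑' k : ℕ,
              (min (P (B k)) (Q (B k))
                  * wassersteinPow r (ProbabilityTheory.cond P (B k))
                      (ProbabilityTheory.cond Q (B k))
                + ENNReal.ofReal (w (k + 1) ^ r) * ennrDiff (P (B k)) (Q (B k))) := by
  obtain rfl : B = fun k => dist x₀ ⁻¹' Ico (w k) (w (k + 1)) := funext hB
  have hdist : Measurable (dist x₀) := (continuous_const.dist continuous_id).measurable
  refine ⟨2 ^ (r - 1), ENNReal.rpow_pos two_pos ofNat_ne_top,
    ENNReal.rpow_ne_top_of_nonneg (by linarith) ofNat_ne_top, fun P Q _ _ => ?_⟩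
  exact wassersteinPow_le_of_partition hr x₀ (fun k => hdist measurableSet_Ico)
    (pairwise_disjoint_preimage_Ico_succ hwmono _)
    (iUnion_preimage_Ico_succ_eq_univ hwmono hw0 hwlim fun _ => dist_nonneg)
    (fun k x hx => edist_rpow_le_ofReal_rpow hx.2.le (by linarith)) P Q
end

section
/- Let k and n be positive integers with k ≤ 32n. Let Δ^k := {p ∈ ℝ^k : p_i ≥ 0 for all i, ∑_{i=1}^k p_i = 1} be the probability simplex, and for p ∈ Δ^k let X_1,…,X_n be i.i.d. samples from the categorical distribution on {1,…,k} with probability vector p. Then inf_{p̂} sup_{p ∈ Δ^k} E[ ‖p − p̂(X_1,…,X_n)‖_1 ] ≥ (3·log 2 / 4096) · √((k−1)/n), where the infimum is over all (possibly randomized) estimators p̂ : {1,…,k}^n → Δ^k and ‖·‖_1 denotes the ℓ¹ norm on ℝ^k. -/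
open MeasureTheory ENNReal

/-- The probability simplex in `ℝ^k`. -/
def probSimplex (k : ℕ) : Set (Fin k → ℝ) :=
  {p | (∀ i, 0 ≤ p i) ∧ ∑ i, p i = 1}

/-- The categorical distribution on `{1,…,k}` with probability vector `p`. -/
noncomputable def categorical {k : ℕ} (p : Fin k → ℝ) : MeasureTheory.Measure (Fin k) :=
  ∑ i : Fin k, ENNReal.ofReal (p i) • MeasureTheory.Measure.dirac i

/-!
Assouad's method. Pair up `2m = 2⌊k/2⌋` outcomes and, for `τ ∈ {0,1}^m`, let `p_τ` put masses
`1/(2m) ± δ` on the two outcomes of the `j`-th pair, the sign chosen by `τ_j`. An estimate `p̂`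
yields a guess of `τ` (is `p̂` above `1/(2m)` on the first outcome of each pair?), and every wrong
bit costs at least `δ` in `ℓ¹`. Neighbouring vertices have Hellinger affinity at least
`1 - 1/(16n)`, so by Le Cam's inequality the laws of `n` samples under them overlap in mass at
least `7/16`; averaging over the cube, some `p_τ` has risk at least `(7/32) m δ`, and
`δ = √((k-1)/n) / (16m)` is small enough for that affinity bound.
-/

open Finset Function

section Assouad

variable {ι : Type*} [DecidableEq ι]

def flipAt (j : ι) (τ : ι → Bool) : ι → Bool := update τ j (!τ j)

@[simp] lemma flipAt_apply_self (j : ι) (τ : ι → Bool) : flipAt j τ j = !τ j := update_self ..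

lemma flipAt_apply_of_ne {j j' : ι} (h : j' ≠ j) (τ : ι → Bool) : flipAt j τ j' = τ j' :=
  update_of_ne h ..

lemma flipAt_involutive (j : ι) : Involutive (flipAt j) := fun τ => by
  ext j'
  obtain rfl | h := eq_or_ne j' j
  · simp
  · simp [flipAt_apply_of_ne h]

variable {X : Type*}

lemma min_le_add_mul_ite_ne (w : (ι → Bool) → X → ℝ) (D : X → ι → Bool) (j : ι)
    (τ : ι → Bool) (x : X) :
    min (w τ x) (w (flipAt j τ) x) ≤
      w τ x * (if D x j ≠ τ j then 1 else 0) +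
        w (flipAt j τ) x * (if D x j ≠ flipAt j τ j then 1 else 0) := by
  rw [flipAt_apply_self]
  cases D x j <;> cases τ j <;> simp

variable [Fintype ι] [Fintype X]

/-- **Assouad's lemma**. A decision rule gets bit `j` wrong for exactly one of `τ` and
`flipAt j τ`, so on that pair it pays at least the overlap `min`. -/
theorem card_mul_two_pow_mul_le_two_mul_sum_hammingDist (w : (ι → Bool) → X → ℝ)
    (D : X → ι → Bool) {c : ℝ} (hc : ∀ τ j, c ≤ ∑ x, min (w τ x) (w (flipAt j τ) x)) :
    Fintype.card ι * (2 ^ Fintype.card ι * c) ≤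
      2 * ∑ τ, ∑ x, w τ x * hammingDist (D x) τ := by
  have hpair (j : ι) (x : X) : ∑ τ, min (w τ x) (w (flipAt j τ) x) ≤
      2 * ∑ τ, w τ x * (if D x j ≠ τ j then 1 else 0) := by
    calc ∑ τ, min (w τ x) (w (flipAt j τ) x)
        ≤ ∑ τ, (w τ x * (if D x j ≠ τ j then 1 else 0) +
            w (flipAt j τ) x * (if D x j ≠ flipAt j τ j then 1 else 0)) :=
          sum_le_sum fun τ _ => min_le_add_mul_ite_ne w D j τ x
      _ = 2 * ∑ τ, w τ x * (if D x j ≠ τ j then 1 else 0) := by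
          rw [sum_add_distrib, two_mul]
          congr 1
          exact Equiv.sum_comp (flipAt_involutive j).toPerm
            (fun τ => w τ x * if D x j ≠ τ j then 1 else 0)
  have hcube (j : ι) : 2 ^ Fintype.card ι * c ≤ ∑ x, ∑ τ, min (w τ x) (w (flipAt j τ) x) := by
    rw [sum_comm]
    simpa using card_nsmul_le_sum univ _ c fun τ _ => hc τ j
  calc Fintype.card ι * (2 ^ Fintype.card ι * c)
      ≤ ∑ j, ∑ x, ∑ τ, min (w τ x) (w (flipAt j τ) x) := by
        simpa using card_nsmul_le_sum univ _ _ fun j _ => hcube j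
    _ ≤ ∑ j, ∑ x, 2 * ∑ τ, w τ x * (if D x j ≠ τ j then 1 else 0) := by
        gcongr with j _ x _
        exact hpair j x
    _ = 2 * ∑ τ, ∑ x, w τ x * hammingDist (D x) τ := by
        simp_rw [hammingDist, natCast_card_filter, mul_sum]
        rw [sum_comm_cycle]
        exact sum_congr rfl fun τ _ => sum_comm

end Assouad

section Affinity

variable {α : Type*} [Fintype α]

/-- Le Cam's inequality. -/
theorem sq_sum_sqrt_mul_le_two_mul_sum_min {u v : α → ℝ} (hu : ∀ a, 0 ≤ u a) (hv : ∀ a, 0 ≤ v a)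
    (hu₁ : ∑ a, u a = 1) (hv₁ : ∑ a, v a = 1) :
    (∑ a, √(u a * v a)) ^ 2 ≤ 2 * ∑ a, min (u a) (v a) := by
  have hmax : ∑ a, max (u a) (v a) ≤ 2 :=
    calc ∑ a, max (u a) (v a) ≤ ∑ a, (u a + v a) :=
          sum_le_sum fun a _ => max_le_add_of_nonneg (hu a) (hv a)
      _ = 2 := by rw [sum_add_distrib, hu₁, hv₁]; norm_num
  calc (∑ a, √(u a * v a)) ^ 2 ≤ (∑ a, min (u a) (v a)) * ∑ a, max (u a) (v a) := by
        refine sum_sq_le_sum_mul_sum_of_sq_le_mul _ (fun a _ => le_min (hu a) (hv a))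
          (fun a _ => (hu a).trans (le_max_left _ _)) fun a _ => ?_
        rw [Real.sq_sqrt (mul_nonneg (hu a) (hv a)), min_mul_max]
    _ ≤ (∑ a, min (u a) (v a)) * 2 :=
        mul_le_mul_of_nonneg_left hmax (sum_nonneg fun a _ => le_min (hu a) (hv a))
    _ = 2 * ∑ a, min (u a) (v a) := mul_comm _ _

theorem sum_sqrt_prod_mul_prod {n : ℕ} {u v : α → ℝ} (hu : ∀ a, 0 ≤ u a) (hv : ∀ a, 0 ≤ v a) :
    ∑ x : Fin n → α, √((∏ i, u (x i)) * ∏ i, v (x i)) = (∑ a, √(u a * v a)) ^ n := by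
  rw [Fintype.sum_pow]
  refine sum_congr rfl fun x _ => ?_
  rw [← prod_mul_distrib, Real.sqrt_prod _ fun i _ => mul_nonneg (hu _) (hv _)]

lemma one_div_sixteen_mul_le (n : ℕ) : 1 / (16 * n : ℝ) ≤ 1 / 16 := by
  rcases n.eq_zero_or_pos with rfl | hn
  · norm_num
  · gcongr; norm_cast; omega

lemma seven_eighths_le_one_sub_pow (n : ℕ) : 7 / 8 ≤ (1 - 1 / (16 * n : ℝ)) ^ (2 * n) := by
  rcases n.eq_zero_or_pos with rfl | hn
  · norm_num
  have hbern := one_add_mul_le_pow (a := -(1 / (16 * n : ℝ)))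
    (by linarith [one_div_sixteen_mul_le n]) (2 * n)
  have : (2 * n : ℕ) * (1 / (16 * n : ℝ)) = 1 / 8 := by field_simp; push_cast; ring
  rw [← sub_eq_add_neg, mul_neg, this] at hbern
  linarith

lemma sub_le_sqrt_sq_sub_sq {a δ t : ℝ} (ht : 0 ≤ t) (hta : t ≤ a) (hδ : δ ^ 2 ≤ a * t) :
    a - t ≤ √(a ^ 2 - δ ^ 2) :=
  Real.le_sqrt_of_sq_le (by nlinarith)

theorem seven_sixteenths_le_sum_min_prod {n : ℕ} {u v : α → ℝ} (hu : ∀ a, 0 ≤ u a)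
    (hv : ∀ a, 0 ≤ v a) (hu₁ : ∑ a, u a = 1) (hv₁ : ∑ a, v a = 1)
    (haff : 1 - 1 / (16 * n : ℝ) ≤ ∑ a, √(u a * v a)) :
    7 / 16 ≤ ∑ x : Fin n → α, min (∏ i, u (x i)) (∏ i, v (x i)) := by
  have hle_sq := sq_sum_sqrt_mul_le_two_mul_sum_min (u := fun x : Fin n → α => ∏ i, u (x i))
    (v := fun x => ∏ i, v (x i)) (fun x => prod_nonneg fun i _ => hu _)
    (fun x => prod_nonneg fun i _ => hv _) (by rw [← Fintype.sum_pow, hu₁, one_pow])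
    (by rw [← Fintype.sum_pow, hv₁, one_pow])
  rw [sum_sqrt_prod_mul_prod hu hv, ← pow_mul, mul_comm n] at hle_sq
  have : (1 - 1 / (16 * n : ℝ)) ^ (2 * n) ≤ (∑ a, √(u a * v a)) ^ (2 * n) := by
    gcongr
    linarith [one_div_sixteen_mul_le n]
  linarith [seven_eighths_le_one_sub_pow n]

end Affinity

lemma sum_eq_sum_comp_embedding {β γ M : Type*} [Fintype β] [Fintype γ] [AddCommMonoid M]
    (e : β ↪ γ) {f : γ → M} (hf : ∀ i ∉ Set.range e, f i = 0) :
    ∑ i, f i = ∑ b, f (e b) :=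
  (Fintype.sum_of_injective e e.injective _ f hf fun _ => rfl).symm

section HypercubeVec

variable {ι α : Type*} (e : ι × Bool ↪ α) (a δ : ℝ)

-- Vertex `τ` of the hypercube: masses `a ± δ` on the pair `e (j, true)`, `e (j, false)`, the larger
-- one on `e (j, τ j)`, and mass `0` off the range of `e`.
noncomputable def hypercubeVec (τ : ι → Bool) : α → ℝ :=
  extend e (fun jb => a + if jb.2 = τ jb.1 then δ else -δ) 0

variable {a δ}

@[simp] lemma hypercubeVec_apply_embedding (τ : ι → Bool) (jb : ι × Bool) :
    hypercubeVec e a δ τ (e jb) = a + if jb.2 = τ jb.1 then δ else -δ :=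
  e.injective.extend_apply ..

lemma hypercubeVec_apply_of_notMem (τ : ι → Bool) {i : α} (hi : i ∉ Set.range e) :
    hypercubeVec e a δ τ i = 0 :=
  extend_apply' _ _ _ hi

lemma hypercubeVec_nonneg (hδ : 0 ≤ δ) (hδa : δ ≤ a) (τ : ι → Bool) (i : α) :
    0 ≤ hypercubeVec e a δ τ i := by
  by_cases hi : ∃ jb, e jb = i
  · obtain ⟨jb, rfl⟩ := hi
    rw [hypercubeVec_apply_embedding]
    split_ifs <;> linarith
  · rw [hypercubeVec_apply_of_notMem e τ hi]

variable [Fintype ι] [Fintype α]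

lemma sum_hypercubeVec (τ : ι → Bool) :
    ∑ i, hypercubeVec e a δ τ i = Fintype.card ι * (2 * a) := by
  rw [sum_eq_sum_comp_embedding e fun i hi => hypercubeVec_apply_of_notMem e τ hi]
  simp only [hypercubeVec_apply_embedding, Fintype.sum_prod_type, Fintype.sum_bool]
  rw [← card_univ, ← nsmul_eq_mul, ← sum_const]
  refine sum_congr rfl fun j _ => ?_
  cases τ j <;> simp <;> ring

lemma mul_hammingDist_le_sum_abs_sub (hδ : 0 ≤ δ) (τ : ι → Bool) (q : α → ℝ) :
    δ * hammingDist (fun j => decide (a ≤ q (e (j, true)))) τ ≤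
      ∑ i, |hypercubeVec e a δ τ i - q i| := by
  have hcoord (j : ι) : δ * (if decide (a ≤ q (e (j, true))) ≠ τ j then 1 else 0) ≤
      |hypercubeVec e a δ τ (e (j, true)) - q (e (j, true))| := by
    rw [hypercubeVec_apply_embedding]
    by_cases ha : a ≤ q (e (j, true)) <;> cases τ j <;> simp [ha]
    · rw [abs_sub_comm, abs_of_nonneg (by linarith)]; linarith
    · rw [abs_of_nonneg (by linarith)]; linarith
  calc δ * hammingDist (fun j => decide (a ≤ q (e (j, true)))) τ
      ≤ ∑ j, |hypercubeVec e a δ τ (e (j, true)) - q (e (j, true))| := by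
        rw [hammingDist, natCast_card_filter, mul_sum]
        exact sum_le_sum fun j _ => hcoord j
    _ = ∑ i ∈ univ.map ((Embedding.sectL ι true).trans e), |hypercubeVec e a δ τ i - q i| := by
        rw [sum_map]; rfl
    _ ≤ ∑ i, |hypercubeVec e a δ τ i - q i| :=
        sum_le_sum_of_subset_of_nonneg (subset_univ _) fun _ _ _ => abs_nonneg _

variable [DecidableEq ι]

lemma sum_sqrt_hypercubeVec_mul_flipAt (hδ : 0 ≤ δ) (hδa : δ ≤ a) (τ : ι → Bool) (j : ι) :
    ∑ i, √(hypercubeVec e a δ τ i * hypercubeVec e a δ (flipAt j τ) i) =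
      Fintype.card ι * (2 * a) - 2 * a + 2 * √(a ^ 2 - δ ^ 2) := by
  rw [sum_eq_sum_comp_embedding e fun i hi => by
    rw [hypercubeVec_apply_of_notMem e τ hi, zero_mul, Real.sqrt_zero]]
  simp only [hypercubeVec_apply_embedding, Fintype.sum_prod_type, Fintype.sum_bool]
  have hterm (j' : ι) :
      √((a + if true = τ j' then δ else -δ) * (a + if true = flipAt j τ j' then δ else -δ)) +
      √((a + if false = τ j' then δ else -δ) * (a + if false = flipAt j τ j' then δ else -δ)) =
        2 * a + if j' = j then 2 * √(a ^ 2 - δ ^ 2) - 2 * a else 0 := by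
    obtain rfl | hj := eq_or_ne j' j
    · have hsq : (a + δ) * (a + -δ) = a ^ 2 - δ ^ 2 := by ring
      have hsq' : (a + -δ) * (a + δ) = a ^ 2 - δ ^ 2 := by ring
      rw [flipAt_apply_self, if_pos rfl]
      cases τ j' <;> simp only [Bool.not_false, Bool.not_true, Bool.true_eq_false,
        Bool.false_eq_true, if_true, if_false, hsq, hsq'] <;> ring
    · rw [flipAt_apply_of_ne hj, if_neg hj]
      cases τ j' <;> simp only [Bool.true_eq_false, Bool.false_eq_true, if_true, if_false] <;>
        rw [Real.sqrt_mul_self (by linarith), Real.sqrt_mul_self (by linarith)] <;> ring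
  rw [sum_congr rfl fun j' _ => hterm j', sum_add_distrib, sum_ite_eq', if_pos (mem_univ _),
    sum_const, card_univ, nsmul_eq_mul]
  ring

end HypercubeVec

section Risk

variable {ι α : Type*} [Fintype ι] [DecidableEq ι] [Fintype α] {a δ : ℝ}

theorem exists_hypercubeVec_risk_ge {n : ℕ} (e : ι × Bool ↪ α) (est : (Fin n → α) → α → ℝ)
    (hδ : 0 ≤ δ) (hmass : Fintype.card ι * (2 * a) = 1) (hta : 1 / (32 * n) ≤ a)
    (hδt : δ ^ 2 ≤ a / (32 * n)) :
    ∃ τ, (∀ i, 0 ≤ hypercubeVec e a δ τ i) ∧ ∑ i, hypercubeVec e a δ τ i = 1 ∧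
      7 / 32 * (Fintype.card ι * δ) ≤
        ∑ x, (∏ i, hypercubeVec e a δ τ (x i)) * ∑ i, |hypercubeVec e a δ τ i - est x i| := by
  have ht : 0 ≤ 1 / (32 * n : ℝ) := by positivity
  have hδa : δ ≤ a := by
    have : δ ^ 2 ≤ a ^ 2 := by
      rw [div_eq_mul_one_div] at hδt; nlinarith
    nlinarith
  set p := hypercubeVec e a δ
  have hp (τ : ι → Bool) : ∀ i, 0 ≤ p τ i := hypercubeVec_nonneg e hδ hδa τ
  have hp₁ (τ : ι → Bool) : ∑ i, p τ i = 1 := (sum_hypercubeVec e τ).trans hmass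
  have haff (τ : ι → Bool) (j : ι) : 1 - 1 / (16 * n : ℝ) ≤ ∑ i, √(p τ i * p (flipAt j τ) i) := by
    rw [sum_sqrt_hypercubeVec_mul_flipAt e hδ hδa, hmass]
    have := sub_le_sqrt_sq_sub_sq ht hta (by rwa [← div_eq_mul_one_div])
    have : 1 / (16 * n : ℝ) = 2 * (1 / (32 * n)) := by ring
    linarith
  have hassouad := card_mul_two_pow_mul_le_two_mul_sum_hammingDist
    (fun τ x => ∏ i, p τ (x i)) (fun x j => decide (a ≤ est x (e (j, true)))) (c := 7 / 16)
    fun τ j => seven_sixteenths_le_sum_min_prod (hp τ) (hp _) (hp₁ τ) (hp₁ _) (haff τ j)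
  have hrisk : ∑ _τ : ι → Bool, 7 / 32 * (Fintype.card ι * δ) ≤
      ∑ τ, ∑ x, (∏ i, p τ (x i)) * ∑ i, |p τ i - est x i| :=
    calc ∑ _τ : ι → Bool, 7 / 32 * (Fintype.card ι * δ)
        = δ * (Fintype.card ι * (2 ^ Fintype.card ι * (7 / 16))) / 2 := by
          simp; ring
      _ ≤ δ * (2 * ∑ τ, ∑ x, (∏ i, p τ (x i)) *
            hammingDist (fun j => decide (a ≤ est x (e (j, true)))) τ) / 2 := by gcongr
      _ = ∑ τ, ∑ x, (∏ i, p τ (x i)) *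
            (δ * hammingDist (fun j => decide (a ≤ est x (e (j, true)))) τ) := by
          rw [mul_div_assoc, mul_div_cancel_left₀ _ two_ne_zero, mul_sum]
          simp_rw [mul_sum, mul_left_comm δ]
      _ ≤ ∑ τ, ∑ x, (∏ i, p τ (x i)) * ∑ i, |p τ i - est x i| := by
          gcongr with τ _ x _
          · exact prod_nonneg fun i _ => hp τ _
          · exact mul_hammingDist_le_sum_abs_sub e hδ τ (est x)
  obtain ⟨τ, -, hτ⟩ := exists_le_of_sum_le univ_nonempty hrisk
  exact ⟨τ, hp τ, hp₁ τ, hτ⟩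

end Risk

section Categorical

open MeasureTheory

lemma categorical_singleton {k : ℕ} (p : Fin k → ℝ) (y : Fin k) :
    categorical p {y} = ENNReal.ofReal (p y) := by
  simp [categorical, Measure.finsetSum_apply, Pi.single_apply]

instance isFiniteMeasure_categorical {k : ℕ} (p : Fin k → ℝ) :
    IsFiniteMeasure (categorical p) :=
  ⟨by simp [categorical, Measure.finsetSum_apply, ENNReal.sum_lt_top]⟩

lemma lintegral_pi_categorical {ι : Type*} [Fintype ι] [DecidableEq ι] {k : ℕ} {p : Fin k → ℝ}
    (hp : ∀ i, 0 ≤ p i) {f : (ι → Fin k) → ℝ} (hf : ∀ x, 0 ≤ f x) :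
    ∫⁻ x, ENNReal.ofReal (f x) ∂(Measure.pi fun _ : ι => categorical p) =
      ENNReal.ofReal (∑ x, (∏ i, p (x i)) * f x) := by
  rw [lintegral_fintype, ENNReal.ofReal_sum_of_nonneg fun x _ =>
    mul_nonneg (prod_nonneg fun i _ => hp _) (hf x)]
  refine sum_congr rfl fun x _ => ?_
  rw [← Set.univ_pi_singleton x, Measure.pi_pi]
  simp_rw [categorical_singleton]
  rw [ENNReal.ofReal_mul (prod_nonneg fun i _ => hp _), ENNReal.ofReal_prod_of_nonneg
    fun i _ => hp _, mul_comm]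

end Categorical

theorem exists_mem_probSimplex_risk_ge {k n : ℕ} (hk : 2 ≤ k) (hkn : k ≤ 32 * n)
    (est : (Fin n → Fin k) → Fin k → ℝ) :
    ∃ p ∈ probSimplex k, 7 / 512 * √(((k : ℝ) - 1) / n) ≤
      ∑ x, (∏ i, p (x i)) * ∑ i, |p i - est x i| := by
  set m := k / 2
  have hm : (0 : ℝ) < m := by norm_cast; omega
  have hn : (0 : ℝ) < n := by norm_cast; omega
  have hmn : (2 * m : ℝ) ≤ 32 * n := by norm_cast; omega
  have hk1 : 1 ≤ (k : ℝ) := by norm_cast; omega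
  have hkm : (k : ℝ) ≤ 2 * m + 1 := by norm_cast; omega
  obtain ⟨e⟩ : Nonempty (Fin m × Bool ↪ Fin k) :=
    Function.Embedding.nonempty_of_card_le (by simp; omega)
  set δ := √(((k : ℝ) - 1) / n) / (16 * m)
  have hmass : (Fintype.card (Fin m) : ℝ) * (2 * (1 / (2 * m))) = 1 := by simp; field_simp
  have hδt : δ ^ 2 ≤ 1 / (2 * m) / (32 * n) := by
    rw [div_pow, Real.sq_sqrt (div_nonneg (by linarith) hn.le)]
    field_simp
    nlinarith
  obtain ⟨τ, hp, hp₁, hτ⟩ := exists_hypercubeVec_risk_ge e est (by positivity) hmass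
    (one_div_le_one_div_of_le (by linarith) hmn) hδt
  refine ⟨_, ⟨hp, hp₁⟩, le_of_eq_of_le ?_ hτ⟩
  simp only [Fintype.card_fin, δ]
  field_simp
  ring

theorem stmt_9_general (k n : ℕ) (hkn : k ≤ 32 * n)
    (est : (Fin n → Fin k) → (Fin k → ℝ)) :
    ENNReal.ofReal (3 * Real.log 2 / 4096 * Real.sqrt (((k : ℝ) - 1) / n))
      ≤ ⨆ (p : Fin k → ℝ) (_ : p ∈ probSimplex k),
          ∫⁻ x, ENNReal.ofReal (∑ i, |p i - est x i|)
            ∂(MeasureTheory.Measure.pi fun _ : Fin n => categorical p) := by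
  obtain hk | hk := lt_or_ge k 2
  · have hk1 : (k : ℝ) - 1 ≤ 0 := by
      have : (k : ℝ) ≤ 1 := by exact_mod_cast (by omega : k ≤ 1)
      linarith
    simp [Real.sqrt_eq_zero'.2 (div_nonpos_of_nonpos_of_nonneg hk1 n.cast_nonneg)]
  obtain ⟨p, hp, hrisk⟩ := exists_mem_probSimplex_risk_ge hk hkn est
  refine le_iSup₂_of_le p hp ?_
  rw [lintegral_pi_categorical hp.1 fun x => sum_nonneg fun i _ => abs_nonneg _]
  refine ENNReal.ofReal_le_ofReal (le_trans ?_ hrisk)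
  exact mul_le_mul_of_nonneg_right (by linarith [Real.log_le_sub_one_of_pos two_pos])
    (Real.sqrt_nonneg _)

/-- Lemma 7: minimax lower bound for estimating a multinomial mean vector in `ℓ¹` loss. -/
theorem stmt_9 (k n : ℕ) (hk : 1 ≤ k) (hn : 1 ≤ n) (hkn : k ≤ 32 * n)
    (est : (Fin n → Fin k) → (Fin k → ℝ)) (hest : ∀ x, est x ∈ probSimplex k) :
    ENNReal.ofReal (3 * Real.log 2 / 4096 * Real.sqrt (((k : ℝ) - 1) / n))
      ≤ ⨆ (p : Fin k → ℝ) (_ : p ∈ probSimplex k),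
          ∫⁻ x, ENNReal.ofReal (∑ i, |p i - est x i|)
            ∂(MeasureTheory.Measure.pi fun _ : Fin n => categorical p) :=
  stmt_9_general k n hkn est
end

section
/- Let Ω be a nonempty finite set equipped, for some δ > 0, with the metric ρ(x,y) := δ·1{x ≠ y}, and let r ∈ [1,∞). For any Borel probability measure P on Ω, if P̂ is the empirical distribution of n i.i.d. samples from P, then E[W_r^r(P, P̂)] ≤ δ^r · √((|Ω| − 1)/n). -/
/-!
Couple `P` and `Q` by leaving the common mass `min (P {x}) (Q {x})` on the diagonal and
transporting the excess of `P` onto the excess of `Q` by the normalised product coupling.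
Since all distances are at most `δ`, this gives `W_r^r(P, Q) ≤ δ^r ∑ₓ (P {x} - Q {x})₊`.
For `Q = P̂`, `n P̂ {x}` is binomial with parameters `n` and `p = P {x}`, so
`E |p - P̂ {x}| ≤ √Var[P̂ {x}] ≤ √(p (1 - p) / n)`; finally, by Cauchy–Schwarz,
`∑ₓ √(pₓ (1 - pₓ)) ≤ √((∑ₓ pₓ) (∑ₓ (1 - pₓ))) = √(|Ω| - 1)`.
-/

open MeasureTheory ENNReal

open Set ProbabilityTheory

section Coupling

variable {Ω : Type*} [MeasurableSpace Ω]

lemma add_mem_couplings {μ ν : Measure (Ω × Ω)} {P Q P' Q' : Measure Ω}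
    (hμ : μ ∈ couplings P Q) (hν : ν ∈ couplings P' Q') :
    μ + ν ∈ couplings (P + P') (Q + Q') :=
  ⟨by rw [Measure.map_add _ _ measurable_fst, hμ.1, hν.1],
    by rw [Measure.map_add _ _ measurable_snd, hμ.2, hν.2]⟩

lemma map_diag_mem_couplings (M : Measure Ω) : M.map (fun x ↦ (x, x)) ∈ couplings M M := by
  have h_diag : Measurable fun x : Ω ↦ (x, x) := measurable_id.prodMk measurable_id
  exact ⟨by rw [Measure.map_map measurable_fst h_diag]; exact Measure.map_id,
    by rw [Measure.map_map measurable_snd h_diag]; exact Measure.map_id⟩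

lemma inv_smul_prod_mem_couplings (A B : Measure Ω) [IsFiniteMeasure A] [IsFiniteMeasure B]
    (h : A univ = B univ) : (A univ)⁻¹ • A.prod B ∈ couplings A B := by
  rcases eq_or_ne (A univ) 0 with h₀ | h₀
  · have hA : A = 0 := Measure.measure_univ_eq_zero.1 h₀
    have hB : B = 0 := Measure.measure_univ_eq_zero.1 (h ▸ h₀)
    simp [couplings, hA, hB]
  have h_cancel : (A univ)⁻¹ * A univ = 1 := ENNReal.inv_mul_cancel h₀ (measure_ne_top A univ)
  refine ⟨?_, ?_⟩
  · rw [Measure.map_smul, Measure.map_fst_prod, smul_smul, ← h, h_cancel, one_smul]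
  · rw [Measure.map_smul, Measure.map_snd_prod, smul_smul, h_cancel, one_smul]

variable [PseudoEMetricSpace Ω]

lemma wassersteinPow_add_add_le {r : ℝ} (hr : 0 < r) {D : ℝ≥0∞} (hD : ∀ x y : Ω, edist x y ≤ D)
    (M A B : Measure Ω) [IsFiniteMeasure A] [IsFiniteMeasure B] (h : A univ = B univ) :
    wassersteinPow r (M + A) (M + B) ≤ D ^ r * A univ := by
  have h_diag : ∫⁻ p, edist p.1 p.2 ^ r ∂(M.map fun x ↦ (x, x)) = 0 :=
    le_antisymm ((lintegral_map_le _ _).trans (by simp [ENNReal.zero_rpow_of_pos hr])) zero_le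
  have h_prod : ∫⁻ p, edist p.1 p.2 ^ r ∂(A.prod B) ≤ D ^ r * (A univ * A univ) := by
    calc ∫⁻ p, edist p.1 p.2 ^ r ∂(A.prod B) ≤ ∫⁻ _, D ^ r ∂(A.prod B) :=
          lintegral_mono fun p ↦ ENNReal.rpow_le_rpow (hD p.1 p.2) hr.le
      _ = D ^ r * (A univ * A univ) := by
          rw [lintegral_const, ← univ_prod_univ, Measure.prod_prod, h]
  calc wassersteinPow r (M + A) (M + B)
      ≤ ∫⁻ p, edist p.1 p.2 ^ r ∂(M.map (fun x ↦ (x, x)) + (A univ)⁻¹ • A.prod B) :=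
        iInf₂_le _ (add_mem_couplings (map_diag_mem_couplings M)
          (inv_smul_prod_mem_couplings A B h))
    _ ≤ (A univ)⁻¹ * (D ^ r * (A univ * A univ)) := by
        rw [lintegral_add_measure, lintegral_smul_measure, h_diag, zero_add, smul_eq_mul]
        gcongr
    _ ≤ D ^ r * A univ := by
        rcases eq_or_ne (A univ) 0 with h₀ | h₀
        · simp [h₀]
        rw [mul_left_comm, ← mul_assoc (A univ)⁻¹,
          ENNReal.inv_mul_cancel h₀ (measure_ne_top A univ), one_mul]

variable [Countable Ω] [MeasurableSingletonClass Ω]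

lemma wassersteinPow_le_mul_tsum_tsub {r : ℝ} (hr : 0 < r) {D : ℝ≥0∞}
    (hD : ∀ x y : Ω, edist x y ≤ D) (P Q : Measure Ω) [IsProbabilityMeasure P]
    [IsProbabilityMeasure Q] :
    wassersteinPow r P Q ≤ D ^ r * ∑' x, (P {x} - Q {x}) := by
  set M := Measure.sum fun x ↦ min (P {x}) (Q {x}) • Measure.dirac x
  set A := Measure.sum fun x ↦ (P {x} - Q {x}) • Measure.dirac x
  set B := Measure.sum fun x ↦ (Q {x} - P {x}) • Measure.dirac x
  have hP : P = M + A := Measure.ext_of_singleton fun x ↦ by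
    rw [Measure.add_apply, Measure.sum_smul_dirac_singleton, Measure.sum_smul_dirac_singleton,
      add_comm, tsub_add_min]
  have hQ : Q = M + B := Measure.ext_of_singleton fun x ↦ by
    rw [Measure.add_apply, Measure.sum_smul_dirac_singleton, Measure.sum_smul_dirac_singleton,
      add_comm, min_comm, tsub_add_min]
  have : IsFiniteMeasure A := isFiniteMeasure_of_le P (hP ▸ Measure.le_add_left le_rfl)
  have : IsFiniteMeasure B := isFiniteMeasure_of_le Q (hQ ▸ Measure.le_add_left le_rfl)
  have hAB : A univ = B univ := by
    have hM : M univ ≠ ∞ := ne_top_of_le_ne_top (measure_ne_top P univ)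
      (hP ▸ Measure.le_add_right le_rfl univ)
    have h := (measure_univ (μ := P)).trans (measure_univ (μ := Q)).symm
    rw [hP, hQ, Measure.add_apply, Measure.add_apply] at h
    exact (ENNReal.add_right_inj hM).1 h
  calc wassersteinPow r P Q = wassersteinPow r (M + A) (M + B) := by rw [← hP, ← hQ]
    _ ≤ D ^ r * A univ := wassersteinPow_add_add_le hr hD M A B hAB
    _ = D ^ r * ∑' x, (P {x} - Q {x}) := by simp [A, Measure.sum_apply]

end Coupling

section Variance

variable {Ω : Type*} {mΩ : MeasurableSpace Ω} {μ : Measure Ω} [IsProbabilityMeasure μ]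

lemma integral_abs_sub_integral_le_sqrt_variance {X : Ω → ℝ} (hX : MemLp X 2 μ) :
    ∫ ω, |X ω - μ[X]| ∂μ ≤ √Var[X; μ] := by
  -- Jensen's inequality `(∫ |Y|)² ≤ ∫ Y²`, read off from `0 ≤ Var[|Y|]`.
  have hY : MemLp (fun ω ↦ |X ω - μ[X]|) 2 μ := (hX.sub (memLp_const _)).abs
  rw [Real.le_sqrt (integral_nonneg fun _ ↦ abs_nonneg _) (variance_nonneg _ _)]
  calc (∫ ω, |X ω - μ[X]| ∂μ) ^ 2 ≤ μ[(fun ω ↦ |X ω - μ[X]|) ^ 2] := by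
        linarith [variance_eq_sub hY ▸ variance_nonneg _ μ]
    _ = Var[X; μ] := by simp [variance_eq_integral hX.aemeasurable, sq_abs]

end Variance

lemma ENNReal.tsub_le_ofReal_abs_toReal_sub {a b : ℝ≥0∞} (ha : a ≠ ∞) :
    a - b ≤ ENNReal.ofReal |a.toReal - b.toReal| := by
  rcases eq_or_ne b ∞ with rfl | hb
  · simp
  calc a - b = ENNReal.ofReal (a.toReal - b.toReal) := by
        rw [ENNReal.ofReal_sub _ ENNReal.toReal_nonneg, ofReal_toReal ha, ofReal_toReal hb]
    _ ≤ _ := ENNReal.ofReal_le_ofReal (le_abs_self _)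

section EmpiricalMeasure

variable {Ω : Type*} [MeasurableSpace Ω] {s : Set Ω}

lemma empiricalMeasure_apply (n : ℕ) (x : Fin n → Ω) (hs : MeasurableSet s) :
    empiricalMeasure n x s = (n : ℝ≥0∞)⁻¹ * ∑ i, s.indicator 1 (x i) := by
  simp [empiricalMeasure, Measure.dirac_apply' _ hs]

lemma isProbabilityMeasure_empiricalMeasure {n : ℕ} (hn : n ≠ 0) (x : Fin n → Ω) :
    IsProbabilityMeasure (empiricalMeasure n x) := by
  constructor
  simp [empiricalMeasure_apply n x MeasurableSet.univ,
    ENNReal.inv_mul_cancel (Nat.cast_ne_zero.2 hn) (natCast_ne_top n)]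

lemma measureReal_empiricalMeasure (n : ℕ) (x : Fin n → Ω) (hs : MeasurableSet s) :
    (empiricalMeasure n x).real s = (n : ℝ)⁻¹ * ∑ i, s.indicator 1 (x i) := by
  have h_ind : ∀ y, (s.indicator (1 : Ω → ℝ≥0∞) y).toReal = s.indicator 1 y := fun y ↦ by
    by_cases h : y ∈ s <;> simp [h]
  rw [measureReal_def, empiricalMeasure_apply n x hs, toReal_mul,
    toReal_sum fun i _ ↦ by by_cases h : x i ∈ s <;> simp [h]]
  simp [h_ind]

lemma memLp_indicator_one (P : Measure Ω) [IsFiniteMeasure P] (hs : MeasurableSet s)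
    (p : ℝ≥0∞) : MemLp (s.indicator (1 : Ω → ℝ)) p P :=
  memLp_indicator_const p hs 1 (Or.inr (measure_ne_top P s))

variable (P : Measure Ω) [IsProbabilityMeasure P] {n : ℕ}

lemma integral_measureReal_empiricalMeasure (hn : n ≠ 0) (hs : MeasurableSet s) :
    ∫ x, (empiricalMeasure n x).real s ∂(Measure.pi fun _ : Fin n ↦ P) = P.real s := by
  simp_rw [measureReal_empiricalMeasure n _ hs]
  rw [integral_const_mul, integral_finsetSum _ fun i _ ↦
    integrable_comp_eval ((memLp_indicator_one P hs 1).integrable le_rfl)]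
  simp_rw [integral_comp_eval (μ := fun _ : Fin n ↦ P)
    (memLp_indicator_one P hs 1).aestronglyMeasurable, integral_indicator_one hs]
  simp [hn]

lemma variance_measureReal_empiricalMeasure (hs : MeasurableSet s) :
    Var[fun x ↦ (empiricalMeasure n x).real s; Measure.pi fun _ : Fin n ↦ P]
      ≤ P.real s * (1 - P.real s) / n := by
  have h_sum := variance_sum_pi (μ := fun _ : Fin n ↦ P) fun _ ↦ memLp_indicator_one P hs 2
  have h_bernoulli : Var[s.indicator 1; P] ≤ (1 - P.real s) * (P.real s - 0) := by
    rw [← integral_indicator_one hs]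
    refine variance_le_sub_mul_sub (Filter.Eventually.of_forall fun x ↦ ?_)
      (measurable_const.indicator hs).aemeasurable
    by_cases h : x ∈ s <;> simp [h]
  simp_rw [measureReal_empiricalMeasure n _ hs]
  rw [variance_const_mul, ← Finset.sum_fn, h_sum, Finset.sum_const, Finset.card_univ,
    Fintype.card_fin, nsmul_eq_mul, sq, mul_assoc]
  rcases eq_or_ne n 0 with rfl | hn
  · simp
  rw [inv_mul_cancel_left₀ (Nat.cast_ne_zero.2 hn), inv_mul_eq_div]
  gcongr
  linarith

lemma memLp_measureReal_empiricalMeasure (hs : MeasurableSet s) (p : ℝ≥0∞) :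
    MemLp (fun x ↦ (empiricalMeasure n x).real s) p (Measure.pi fun _ : Fin n ↦ P) := by
  simp_rw [measureReal_empiricalMeasure n _ hs]
  exact (memLp_finsetSum (Finset.univ : Finset (Fin n)) fun i _ ↦
    (memLp_indicator_one P hs p).comp_measurePreserving (measurePreserving_eval _ i)).const_mul _

lemma integral_abs_sub_measureReal_empiricalMeasure_le (hn : n ≠ 0) (hs : MeasurableSet s) :
    ∫ x, |P.real s - (empiricalMeasure n x).real s| ∂(Measure.pi fun _ : Fin n ↦ P)
      ≤ √(P.real s * (1 - P.real s) / n) := by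
  have h := integral_abs_sub_integral_le_sqrt_variance
    (memLp_measureReal_empiricalMeasure P (n := n) hs 2)
  rw [integral_measureReal_empiricalMeasure P hn hs] at h
  simp_rw [abs_sub_comm (P.real s)]
  exact h.trans (Real.sqrt_le_sqrt (variance_measureReal_empiricalMeasure P hs))

lemma lintegral_tsub_empiricalMeasure_le (hn : n ≠ 0) (hs : MeasurableSet s) :
    ∫⁻ x, (P s - empiricalMeasure n x s) ∂(Measure.pi fun _ : Fin n ↦ P)
      ≤ ENNReal.ofReal √(P.real s * (1 - P.real s) / n) := by
  have h_int : Integrable (fun x ↦ |P.real s - (empiricalMeasure n x).real s|)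
      (Measure.pi fun _ : Fin n ↦ P) :=
    ((integrable_const _).sub
      ((memLp_measureReal_empiricalMeasure P hs 1).integrable le_rfl)).abs
  calc ∫⁻ x, (P s - empiricalMeasure n x s) ∂(Measure.pi fun _ : Fin n ↦ P)
      ≤ ∫⁻ x, ENNReal.ofReal |P.real s - (empiricalMeasure n x).real s|
          ∂(Measure.pi fun _ : Fin n ↦ P) :=
        lintegral_mono fun _ ↦ ENNReal.tsub_le_ofReal_abs_toReal_sub (measure_ne_top P s)
    _ = ENNReal.ofReal (∫ x, |P.real s - (empiricalMeasure n x).real s|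
          ∂(Measure.pi fun _ : Fin n ↦ P)) :=
        (ofReal_integral_eq_lintegral_ofReal h_int
          (Filter.Eventually.of_forall fun _ ↦ abs_nonneg _)).symm
    _ ≤ _ := ENNReal.ofReal_le_ofReal (integral_abs_sub_measureReal_empiricalMeasure_le P hn hs)

end EmpiricalMeasure

lemma sum_sqrt_mul_one_sub_le {ι : Type*} [Fintype ι] (f : ι → ℝ) (hf₀ : ∀ i, 0 ≤ f i)
    (hf : ∑ i, f i = 1) :
    ∑ i, √(f i * (1 - f i)) ≤ √(Fintype.card ι - 1) := by
  have hf₁ : ∀ i, f i ≤ 1 := fun i ↦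
    hf ▸ Finset.single_le_sum (fun j _ ↦ hf₀ j) (Finset.mem_univ i)
  have h_card : ∑ i, (1 - f i) = Fintype.card ι - 1 := by simp [Finset.sum_sub_distrib, hf]
  rw [Real.le_sqrt (Finset.sum_nonneg fun _ _ ↦ Real.sqrt_nonneg _)
    (h_card ▸ Finset.sum_nonneg fun i _ ↦ sub_nonneg.2 (hf₁ i))]
  calc (∑ i, √(f i * (1 - f i))) ^ 2 ≤ (∑ i, f i) * ∑ i, (1 - f i) :=
        Finset.sum_sq_le_sum_mul_sum_of_sq_le_mul _ (fun i _ ↦ hf₀ i)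
          (fun i _ ↦ sub_nonneg.2 (hf₁ i)) fun i _ ↦ (Real.sq_sqrt (mul_nonneg (hf₀ i)
            (sub_nonneg.2 (hf₁ i)))).le
    _ = Fintype.card ι - 1 := by rw [hf, one_mul, h_card]

theorem stmt_10_general {Ω : Type*} [Fintype Ω]
    [MetricSpace Ω] [MeasurableSpace Ω] [BorelSpace Ω]
    (δ : ℝ) (hδ : 0 < δ) (hρ : ∀ x y : Ω, x ≠ y → dist x y = δ)
    (r : ℝ) (hr : 1 ≤ r) (P : MeasureTheory.Measure Ω)
    [MeasureTheory.IsProbabilityMeasure P] (n : ℕ) (hn : 0 < n) :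
    ∫⁻ x, wassersteinPow r P (empiricalMeasure n x)
        ∂(MeasureTheory.Measure.pi fun _ : Fin n => P)
      ≤ ENNReal.ofReal (δ ^ r * Real.sqrt (((Fintype.card Ω : ℝ) - 1) / n)) := by
  have hD : ∀ x y : Ω, edist x y ≤ ENNReal.ofReal δ := fun x y ↦ by
    rcases eq_or_ne x y with rfl | hxy
    · simp
    · rw [edist_dist, hρ x y hxy]
  have h_sum : ∑ x, √(P.real {x} * (1 - P.real {x}) / n) ≤ √((Fintype.card Ω - 1) / n) := by
    simp_rw [Real.sqrt_div' _ n.cast_nonneg, ← Finset.sum_div]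
    gcongr
    exact sum_sqrt_mul_one_sub_le _ (fun _ ↦ measureReal_nonneg)
      (by simp [sum_measureReal_singleton])
  calc ∫⁻ ω, wassersteinPow r P (empiricalMeasure n ω) ∂(Measure.pi fun _ : Fin n ↦ P)
      ≤ ∫⁻ ω, ENNReal.ofReal δ ^ r * ∑ x, (P {x} - empiricalMeasure n ω {x})
          ∂(Measure.pi fun _ : Fin n ↦ P) := lintegral_mono fun ω ↦ by
        have := isProbabilityMeasure_empiricalMeasure hn.ne' ω
        simpa only [tsum_fintype] using
          wassersteinPow_le_mul_tsum_tsub (by linarith) hD P (empiricalMeasure n ω)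
    _ = ENNReal.ofReal δ ^ r * ∑ x, ∫⁻ ω, (P {x} - empiricalMeasure n ω {x})
          ∂(Measure.pi fun _ : Fin n ↦ P) := by
        rw [lintegral_const_mul' _ _ (by finiteness),
          lintegral_finsetSum' _ fun _ _ ↦ Measurable.of_discrete.aemeasurable]
    _ ≤ ENNReal.ofReal δ ^ r * ∑ x, ENNReal.ofReal √(P.real {x} * (1 - P.real {x}) / n) := by
        gcongr with x
        exact lintegral_tsub_empiricalMeasure_le P hn.ne' (measurableSet_singleton x)
    _ ≤ ENNReal.ofReal (δ ^ r * √((Fintype.card Ω - 1) / n)) := by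
        rw [← ENNReal.ofReal_sum_of_nonneg fun _ _ ↦ Real.sqrt_nonneg _,
          ENNReal.ofReal_rpow_of_pos hδ, ← ENNReal.ofReal_mul (by positivity)]
        gcongr

/-- Example 1 (upper bound): on a finite space with the scaled discrete metric
`ρ(x,y) = δ·1{x ≠ y}`, the empirical distribution satisfies
`E[W_r^r(P,P̂)] ≤ δ^r √((|Ω|-1)/n)`. -/
theorem stmt_10 {Ω : Type*} [Fintype Ω] [Nonempty Ω]
    [MetricSpace Ω] [MeasurableSpace Ω] [BorelSpace Ω]
    (δ : ℝ) (hδ : 0 < δ) (hρ : ∀ x y : Ω, x ≠ y → dist x y = δ)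
    (r : ℝ) (hr : 1 ≤ r) (P : MeasureTheory.Measure Ω)
    [MeasureTheory.IsProbabilityMeasure P] (n : ℕ) (hn : 0 < n) :
    ∫⁻ x, wassersteinPow r P (empiricalMeasure n x)
        ∂(MeasureTheory.Measure.pi fun _ : Fin n => P)
      ≤ ENNReal.ofReal (δ ^ r * Real.sqrt (((Fintype.card Ω : ℝ) - 1) / n)) :=
  stmt_10_general δ hδ hρ r hr P n hn
end

section
/- Let Ω be a finite set equipped, for some δ > 0, with the metric ρ(x,y) := δ·1{x ≠ y}, let r ∈ [1,∞), and let n be a positive integer with 2 ≤ |Ω| ≤ 32n. Then inf_{P̂} sup_{P} E_{X_1,…,X_n ∼ P^n}[ W_r^r(P, P̂(X_1,…,X_n)) ] ≥ (3·log 2 / 2^{r+12}) · δ^r · √((|Ω| − 1)/n), where the supremum is over all probability measures P on Ω and the infimum is over all (possibly randomized) estimators P̂ : Ω^n → {probability measures on Ω}. -/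
open MeasureTheory ENNReal

/-! Assouad's method. Pair up `2m ≤ |Ω|` points and, for each sign vector `θ ∈ {0,1}^m`, split
the mass `1/m` of the `j`-th pair as `(1 ± ε)/(2m)` according to `θ j`. For the discrete metric,
`W_r^r ≥ δ^r · TV`, and the total variation between `P_θ` and any estimate is at least `ε/(2m)`
times the number of pairs on which the heavier point of the estimate disagrees with `θ`.
Flipping one sign keeps the Bhattacharyya affinity of the `n`-fold products above `3/4` as long
as `ε² ≤ m/(4n)`, so by Le Cam's inequality every test errs on that coordinate with total
probability at least `9/32` over the two neighbours. Averaging over the hypercube, some `P_θ`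
has risk at least `(9/128) δ^r ε`, and `ε = min(1, √(m/(4n)))` gives the rate. -/

open Finset

section Affinity

variable {ι : Type*} [Fintype ι]

theorem sq_sum_sqrt_mul_le_sum_min_mul_sum_add_s11 {f g : ι → ℝ} (hf : ∀ i, 0 ≤ f i)
    (hg : ∀ i, 0 ≤ g i) :
    (∑ i, √(f i * g i)) ^ 2 ≤ (∑ i, min (f i) (g i)) * ∑ i, (f i + g i) := by
  have hcs := sum_mul_sq_le_sq_mul_sq univ (fun i ↦ √(min (f i) (g i)))
    (fun i ↦ √(max (f i) (g i)))
  simp only [← Real.sqrt_mul (le_min (hf _) (hg _)), min_mul_max,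
    Real.sq_sqrt (le_min (hf _) (hg _)), Real.sq_sqrt (le_max_of_le_left (hf _))] at hcs
  refine hcs.trans (mul_le_mul_of_nonneg_left (sum_le_sum fun i _ ↦ ?_)
    (sum_nonneg fun i _ ↦ le_min (hf i) (hg i)))
  exact max_le (le_add_of_nonneg_right (hg i)) (le_add_of_nonneg_left (hf i))

theorem sum_sqrt_prod_mul_prod_eq_pow {Ω : Type*} [Fintype Ω] (n : ℕ) {f g : Ω → ℝ}
    (hf : ∀ ω, 0 ≤ f ω) (hg : ∀ ω, 0 ≤ g ω) :
    ∑ x : Fin n → Ω, √((∏ i, f (x i)) * ∏ i, g (x i)) = (∑ ω, √(f ω * g ω)) ^ n := by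
  simp only [Fintype.sum_pow, ← prod_mul_distrib]
  exact sum_congr rfl fun x _ ↦ Real.sqrt_prod _ fun i _ ↦ mul_nonneg (hf _) (hg _)

end Affinity

section Assouad

variable {X : Type*} [Fintype X] {m : ℕ}

theorem involutive_update_not (j : Fin m) :
    Function.Involutive fun θ : Fin m → Bool ↦ Function.update θ j (!θ j) := by
  intro θ
  ext i
  by_cases h : i = j <;> simp [h]

theorem assouad (P : (Fin m → Bool) → X → ℝ) {c : ℝ}
    (hc : ∀ θ j, c ≤ ∑ x, min (P θ x) (P (Function.update θ j (!θ j)) x))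
    (t : X → Fin m → Bool) :
    2 ^ m * m * c / 2 ≤ ∑ θ, ∑ x, (hammingDist (t x) θ : ℝ) * P θ x := by
  classical
  have hcoord (j : Fin m) : 2 ^ m * c / 2 ≤ ∑ θ, ∑ x, if t x j ≠ θ j then P θ x else 0 := by
    set F : (Fin m → Bool) → ℝ := fun θ ↦ ∑ x, if t x j ≠ θ j then P θ x else 0
    have hpair (θ : Fin m → Bool) : c ≤ F θ + F (Function.update θ j (!θ j)) := by
      refine (hc θ j).trans ?_
      rw [← sum_add_distrib]
      refine sum_le_sum fun x _ ↦ ?_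
      -- `t x j` disagrees with exactly one of `θ j` and `!θ j`.
      by_cases h : t x j = θ j <;> simp [h]
    calc 2 ^ m * c / 2 = (∑ _θ : Fin m → Bool, c) / 2 := by simp
      _ ≤ (∑ θ, (F θ + F (Function.update θ j (!θ j)))) / 2 := by gcongr with θ; exact hpair θ
      _ = ∑ θ, F θ := by
        rw [sum_add_distrib, (involutive_update_not j).bijective.sum_comp F]
        ring
  calc 2 ^ m * m * c / 2 = ∑ _j : Fin m, 2 ^ m * c / 2 := by simp; ring
    _ ≤ ∑ j, ∑ θ, ∑ x, if t x j ≠ θ j then P θ x else 0 := sum_le_sum fun j _ ↦ hcoord j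
    _ = ∑ θ, ∑ x, (hammingDist (t x) θ : ℝ) * P θ x := by
      simp only [hammingDist, card_filter, Nat.cast_sum, sum_mul, Nat.cast_ite, ite_mul]
      simp only [Nat.cast_one, one_mul, Nat.cast_zero, zero_mul]
      rw [sum_comm]
      exact sum_congr rfl fun θ _ ↦ sum_comm

end Assouad

section DiscreteWasserstein

variable {Ω : Type*} [Fintype Ω] [MeasurableSpace Ω] [MeasurableSingletonClass Ω]

theorem measure_diagonal_le_sum_min {P Q : Measure Ω} {μ : Measure (Ω × Ω)}
    (hμ : μ ∈ couplings P Q) : μ {p | p.1 = p.2} ≤ ∑ ω, min (P {ω}) (Q {ω}) := by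
  have hdiag : {p : Ω × Ω | p.1 = p.2} = ⋃ ω ∈ (univ : Finset Ω), {(ω, ω)} := by
    ext ⟨a, b⟩
    simp [eq_comm]
  rw [hdiag]
  refine (measure_biUnion_finset_le _ _).trans (sum_le_sum fun ω _ ↦ le_min ?_ ?_)
  · rw [← hμ.1, Measure.map_apply measurable_fst (measurableSet_singleton ω)]
    exact measure_mono (by simp)
  · rw [← hμ.2, Measure.map_apply measurable_snd (measurableSet_singleton ω)]
    exact measure_mono (by simp)

theorem le_wassersteinPow_of_le_edist [PseudoEMetricSpace Ω] {d : ℝ≥0∞}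
    (hd : ∀ x y : Ω, x ≠ y → d ≤ edist x y) {r : ℝ} (hr : 0 ≤ r) (P Q : Measure Ω)
    [IsProbabilityMeasure P] :
    d ^ r * (1 - ∑ ω, min (P {ω}) (Q {ω})) ≤ wassersteinPow r P Q := by
  refine le_iInf₂ fun μ hμ ↦ ?_
  have : IsProbabilityMeasure μ := ⟨by
    rw [← measure_univ (μ := P), ← hμ.1, Measure.map_apply measurable_fst .univ, Set.preimage_univ]⟩
  set D := {p : Ω × Ω | p.1 = p.2}
  have hD : MeasurableSet D := (Set.toFinite D).measurableSet
  calc d ^ r * (1 - ∑ ω, min (P {ω}) (Q {ω})) ≤ d ^ r * μ Dᶜ := by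
        rw [prob_compl_eq_one_sub hD]
        gcongr
        exact measure_diagonal_le_sum_min hμ
    _ = ∫⁻ _ in Dᶜ, d ^ r ∂μ := by rw [setLIntegral_const, mul_comm]
    _ ≤ ∫⁻ p in Dᶜ, edist p.1 p.2 ^ r ∂μ :=
        setLIntegral_mono' hD.compl fun p hp ↦ ENNReal.rpow_le_rpow (hd _ _ hp) hr
    _ ≤ ∫⁻ p, edist p.1 p.2 ^ r ∂μ := setLIntegral_le_lintegral _ _

theorem one_sub_sum_min_measure_singleton (P Q : Measure Ω) [IsProbabilityMeasure P]
    [IsProbabilityMeasure Q] :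
    1 - ∑ ω, min (P {ω}) (Q {ω}) = ENNReal.ofReal ((∑ ω, |P.real {ω} - Q.real {ω}|) / 2) := by
  have habs (a b : ℝ) : |a - b| = a + b - 2 * min a b := by
    rcases le_total a b with h | h
    · rw [abs_of_nonpos (by linarith), min_eq_left h]; ring
    · rw [abs_of_nonneg (by linarith), min_eq_right h]; ring
  have hsum (μ : Measure Ω) [IsProbabilityMeasure μ] : ∑ ω, μ.real {ω} = 1 := by
    rw [sum_measureReal_singleton, coe_univ, probReal_univ]
  have hmin : 0 ≤ ∑ ω, min (P.real {ω}) (Q.real {ω}) :=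
    sum_nonneg fun ω _ ↦ le_min measureReal_nonneg measureReal_nonneg
  simp only [habs, sum_sub_distrib, sum_add_distrib, ← mul_sum, hsum]
  rw [show (1 + 1 - 2 * ∑ ω, min (P.real {ω}) (Q.real {ω})) / 2
      = 1 - ∑ ω, min (P.real {ω}) (Q.real {ω}) by ring,
    ENNReal.ofReal_sub _ hmin, ENNReal.ofReal_one,
    ENNReal.ofReal_sum_of_nonneg fun ω _ ↦ le_min measureReal_nonneg measureReal_nonneg]
  simp [ofReal_measureReal]

end DiscreteWasserstein

section SignTest

variable {ι : Type*} [Fintype ι]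

theorem sum_abs_sub_pair_le {Ω : Type*} [Fintype Ω] (pt : ι × Bool ↪ Ω) (p q : Ω → ℝ) :
    ∑ j, |(p (pt (j, true)) - p (pt (j, false))) - (q (pt (j, true)) - q (pt (j, false)))|
      ≤ ∑ ω, |p ω - q ω| :=
  calc _ ≤ ∑ j, ∑ b, |p (pt (j, b)) - q (pt (j, b))| := sum_le_sum fun j _ ↦ by
          rw [Fintype.sum_bool]
          exact (congrArg abs (by ring)).trans_le (abs_sub _ _)
    _ = ∑ ω ∈ univ.map pt, |p ω - q ω| := by rw [sum_map, Fintype.sum_prod_type]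
    _ ≤ ∑ ω, |p ω - q ω| := sum_le_univ_sum_of_nonneg fun ω ↦ abs_nonneg _

theorem mul_hammingDist_le_sum_abs_sub_s11 {c : ℝ} (hc : 0 ≤ c) (θ : ι → Bool) (a : ι → ℝ) :
    c * hammingDist (fun j ↦ decide (0 ≤ a j)) θ ≤ ∑ j, |(if θ j then c else -c) - a j| := by
  classical
  simp only [hammingDist, card_filter, Nat.cast_sum, mul_sum, Nat.cast_ite, Nat.cast_one,
    Nat.cast_zero, mul_ite, mul_one, mul_zero]
  refine sum_le_sum fun j _ ↦ ?_
  split_ifs with hne hθ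
  · rw [hθ] at hne
    have ha : a j < 0 := by simpa using hne
    rw [abs_of_pos (by linarith)]
    linarith
  · have ha : 0 ≤ a j := by simpa [hθ] using hne
    rw [abs_of_nonpos (by linarith)]
    linarith
  all_goals exact abs_nonneg _

end SignTest

noncomputable section Hypercube

variable {Ω : Type*} {m : ℕ} (pt : Fin m × Bool ↪ Ω) (ε : ℝ)

/-- Assouad's hypercube: `θ j` selects the heavier point of the `j`-th pair `pt (j, ·)`. -/
def hypercubeWeight (θ : Fin m → Bool) (p : Fin m × Bool) : ℝ :=
  (1 + if θ p.1 = p.2 then ε else -ε) / (2 * m)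

def hypercubeDensity (θ : Fin m → Bool) : Ω → ℝ :=
  Function.extend pt (hypercubeWeight ε θ) 0

variable {ε}

theorem hypercubeWeight_nonneg (hε : |ε| ≤ 1) (θ : Fin m → Bool) (p : Fin m × Bool) :
    0 ≤ hypercubeWeight ε θ p := by
  have := abs_le.1 hε
  unfold hypercubeWeight
  split_ifs <;> exact div_nonneg (by linarith) (by positivity)

theorem hypercubeWeight_add (θ : Fin m → Bool) (j : Fin m) (b : Bool) :
    hypercubeWeight ε θ (j, b) + hypercubeWeight ε (Function.update θ j (!θ j)) (j, b) = 1 / m := by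
  cases h : θ j <;> cases b <;> simp [hypercubeWeight, h] <;> field_simp <;> ring

theorem hypercubeWeight_mul (θ : Fin m → Bool) (j : Fin m) (b : Bool) :
    hypercubeWeight ε θ (j, b) * hypercubeWeight ε (Function.update θ j (!θ j)) (j, b)
      = (1 - ε ^ 2) / (2 * m) ^ 2 := by
  cases h : θ j <;> cases b <;> simp [hypercubeWeight, h] <;> field_simp <;> ring

theorem sum_hypercubeWeight (hm : m ≠ 0) (θ : Fin m → Bool) : ∑ p, hypercubeWeight ε θ p = 1 := by
  simp only [Fintype.sum_prod_type, Fintype.sum_bool]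
  have hpair (j : Fin m) :
      hypercubeWeight ε θ (j, true) + hypercubeWeight ε θ (j, false) = 1 / m := by
    cases h : θ j <;> simp [hypercubeWeight, h] <;> field_simp <;> ring
  simp [hpair, hm]

theorem hypercubeDensity_apply (θ : Fin m → Bool) (p : Fin m × Bool) :
    hypercubeDensity pt ε θ (pt p) = hypercubeWeight ε θ p :=
  pt.injective.extend_apply _ _ _

theorem hypercubeDensity_of_notMem_range (θ : Fin m → Bool) {ω : Ω} (hω : ω ∉ Set.range pt) :
    hypercubeDensity pt ε θ ω = 0 :=
  Function.extend_apply' _ _ _ hω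

theorem hypercubeDensity_nonneg (hε : |ε| ≤ 1) (θ : Fin m → Bool) (ω : Ω) :
    0 ≤ hypercubeDensity pt ε θ ω := by
  by_cases hω : ω ∈ Set.range pt
  · obtain ⟨p, rfl⟩ := hω
    rw [hypercubeDensity_apply]
    exact hypercubeWeight_nonneg hε θ p
  · rw [hypercubeDensity_of_notMem_range pt θ hω]

theorem sum_hypercubeDensity [Fintype Ω] (hm : m ≠ 0) (θ : Fin m → Bool) :
    ∑ ω, hypercubeDensity pt ε θ ω = 1 := by
  rw [← Fintype.sum_of_injective pt pt.injective _ _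
    (fun ω hω ↦ hypercubeDensity_of_notMem_range pt θ hω)
    (fun p ↦ (hypercubeDensity_apply pt θ p).symm), sum_hypercubeWeight hm]

theorem hypercubeDensity_sub (θ : Fin m → Bool) (j : Fin m) :
    hypercubeDensity pt ε θ (pt (j, true)) - hypercubeDensity pt ε θ (pt (j, false))
      = if θ j then ε / m else -(ε / m) := by
  simp only [hypercubeDensity_apply]
  cases h : θ j <;> simp [hypercubeWeight, h] <;> field_simp <;> ring

theorem one_sub_sq_div_le_sum_sqrt_hypercubeDensity [Fintype Ω] (hε : |ε| ≤ 1) (θ : Fin m → Bool)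
    (j : Fin m) :
    1 - ε ^ 2 / m ≤ ∑ ω, √(hypercubeDensity pt ε θ ω *
      hypercubeDensity pt ε (Function.update θ j (!θ j)) ω) := by
  set θ' := Function.update θ j (!θ j)
  have hm : m ≠ 0 := (Fin.pos j).ne'
  have hε2 : ε ^ 2 ≤ 1 := by nlinarith [abs_le.1 hε]
  -- Off the `j`-th pair the two weights agree; on it their product is `(1 - ε²) / (2m)²`.
  have hpoint (p : Fin m × Bool) : (hypercubeWeight ε θ p + hypercubeWeight ε θ' p) / 2
      - (if p.1 = j then ε ^ 2 / (2 * m) else 0)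
        ≤ √(hypercubeWeight ε θ p * hypercubeWeight ε θ' p) := by
    obtain ⟨i, b⟩ := p
    by_cases hi : i = j
    · subst hi
      rw [hypercubeWeight_add, hypercubeWeight_mul, if_pos rfl]
      refine Real.le_sqrt_of_sq_le ?_
      rw [show 1 / (m : ℝ) / 2 - ε ^ 2 / (2 * m) = (1 - ε ^ 2) / (2 * m) by field_simp, div_pow]
      exact div_le_div_of_nonneg_right (by nlinarith) (by positivity)
    · have : hypercubeWeight ε θ' (i, b) = hypercubeWeight ε θ (i, b) := by
        simp [θ', hypercubeWeight, Function.update_of_ne hi]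
      rw [this, if_neg hi, Real.sqrt_mul_self (hypercubeWeight_nonneg hε θ _)]
      linarith
  calc 1 - ε ^ 2 / m = ∑ p, ((hypercubeWeight ε θ p + hypercubeWeight ε θ' p) / 2
        - (if p.1 = j then ε ^ 2 / (2 * m) else 0)) := by
        have hj : ∑ p : Fin m × Bool, (if p.1 = j then ε ^ 2 / (2 * m) else 0) = ε ^ 2 / m := by
          rw [Fintype.sum_prod_type, sum_eq_single j (fun i _ hi ↦ by simp [hi]) (by simp)]
          simp
          ring
        rw [sum_sub_distrib, ← sum_div, sum_add_distrib, sum_hypercubeWeight hm,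
          sum_hypercubeWeight hm, hj]
        ring
    _ ≤ ∑ p, √(hypercubeWeight ε θ p * hypercubeWeight ε θ' p) := sum_le_sum fun p _ ↦ hpoint p
    _ = _ := Fintype.sum_of_injective pt pt.injective _ _
        (fun ω hω ↦ by simp [hypercubeDensity_of_notMem_range pt _ hω])
        (fun p ↦ by simp only [hypercubeDensity_apply])

variable [Fintype Ω]

theorem sum_prod_hypercubeDensity {n : ℕ} (hm : m ≠ 0) (θ : Fin m → Bool) :
    ∑ x : Fin n → Ω, ∏ i, hypercubeDensity pt ε θ (x i) = 1 := by
  rw [← Fintype.sum_pow, sum_hypercubeDensity pt hm, one_pow]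

theorem le_sum_min_prod_hypercubeDensity {n : ℕ} (hn : 0 < n) (hε : |ε| ≤ 1)
    (hεm : ε ^ 2 * (4 * n) ≤ m) (θ : Fin m → Bool) (j : Fin m) :
    9 / 32 ≤ ∑ x : Fin n → Ω, min (∏ i, hypercubeDensity pt ε θ (x i))
      (∏ i, hypercubeDensity pt ε (Function.update θ j (!θ j)) (x i)) := by
  have hm : 0 < m := Fin.pos j
  have hq := hypercubeDensity_nonneg pt hε
  have hbase : 1 - 1 / (4 * n) ≤ ∑ ω, √(hypercubeDensity pt ε θ ω *
      hypercubeDensity pt ε (Function.update θ j (!θ j)) ω) := by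
    have : ε ^ 2 / m ≤ 1 / (4 * n) := by
      rw [div_le_div_iff₀ (by positivity) (by positivity)]
      linarith
    linarith [one_sub_sq_div_le_sum_sqrt_hypercubeDensity pt hε θ j]
  have hn1 : (1 : ℝ) ≤ n := by exact_mod_cast hn
  have hquarter : 1 / (4 * n : ℝ) ≤ 1 / 4 := by gcongr; linarith
  have haffinity : 3 / 4 ≤ ∑ x : Fin n → Ω, √((∏ i, hypercubeDensity pt ε θ (x i)) *
      ∏ i, hypercubeDensity pt ε (Function.update θ j (!θ j)) (x i)) := by
    rw [sum_sqrt_prod_mul_prod_eq_pow n (hq θ) (hq _)]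
    calc (3 / 4 : ℝ) = 1 + n * -(1 / (4 * n)) := by field_simp; ring
      _ ≤ (1 + -(1 / (4 * n))) ^ n := one_add_mul_le_pow (by linarith [hquarter]) n
      _ ≤ _ := pow_le_pow_left₀ (by linarith) (by linarith) n
  have hcs := sq_sum_sqrt_mul_le_sum_min_mul_sum_add_s11
    (f := fun x : Fin n → Ω ↦ ∏ i, hypercubeDensity pt ε θ (x i))
    (g := fun x ↦ ∏ i, hypercubeDensity pt ε (Function.update θ j (!θ j)) (x i))
    (fun x ↦ prod_nonneg fun i _ ↦ hq _ (x i)) (fun x ↦ prod_nonneg fun i _ ↦ hq _ (x i))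
  rw [sum_add_distrib, sum_prod_hypercubeDensity pt hm.ne', sum_prod_hypercubeDensity pt hm.ne']
    at hcs
  nlinarith [pow_le_pow_left₀ (by norm_num) haffinity 2]

variable [MeasurableSpace Ω]

variable (ε) in
def hypercubeMeasure (θ : Fin m → Bool) : Measure Ω :=
  ∑ ω, ENNReal.ofReal (hypercubeDensity pt ε θ ω) • Measure.dirac ω

variable [MeasurableSingletonClass Ω]

theorem hypercubeMeasure_singleton (θ : Fin m → Bool) (ω : Ω) :
    hypercubeMeasure pt ε θ {ω} = ENNReal.ofReal (hypercubeDensity pt ε θ ω) := by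
  classical
  simp [hypercubeMeasure, Set.indicator_apply]

theorem isProbabilityMeasure_hypercubeMeasure (hm : m ≠ 0) (hε : |ε| ≤ 1) (θ : Fin m → Bool) :
    IsProbabilityMeasure (hypercubeMeasure pt ε θ) := by
  constructor
  rw [← coe_univ, ← sum_measure_singleton]
  simp only [hypercubeMeasure_singleton]
  rw [← ENNReal.ofReal_sum_of_nonneg fun ω _ ↦ hypercubeDensity_nonneg pt hε θ ω,
    sum_hypercubeDensity pt hm, ENNReal.ofReal_one]

theorem hypercubeMeasure_real_singleton (hε : |ε| ≤ 1) (θ : Fin m → Bool) (ω : Ω) :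
    (hypercubeMeasure pt ε θ).real {ω} = hypercubeDensity pt ε θ ω := by
  rw [measureReal_def, hypercubeMeasure_singleton, ENNReal.toReal_ofReal
    (hypercubeDensity_nonneg pt hε θ ω)]

end Hypercube

noncomputable section MinimaxRisk

variable {Ω : Type*} [Fintype Ω] [MeasurableSpace Ω] [MeasurableSingletonClass Ω] {m : ℕ}
  (pt : Fin m × Bool ↪ Ω)

def hypercubeTest (Q : Measure Ω) (j : Fin m) : Bool :=
  decide (0 ≤ Q.real {pt (j, true)} - Q.real {pt (j, false)})

variable [PseudoMetricSpace Ω] {δ r ε : ℝ}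

theorem ofReal_mul_hammingDist_le_wassersteinPow (hδ : 0 ≤ δ)
    (hρ : ∀ x y : Ω, x ≠ y → δ ≤ dist x y) (hr : 0 ≤ r) (hm : m ≠ 0) (hε₀ : 0 ≤ ε) (hε₁ : ε ≤ 1)
    (θ : Fin m → Bool) (Q : Measure Ω) [IsProbabilityMeasure Q] :
    ENNReal.ofReal (δ ^ r * (ε / (2 * m)) * hammingDist (hypercubeTest pt Q) θ)
      ≤ wassersteinPow r (hypercubeMeasure pt ε θ) Q := by
  have hε : |ε| ≤ 1 := abs_le.2 ⟨by linarith, hε₁⟩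
  have := isProbabilityMeasure_hypercubeMeasure pt hm hε θ
  have hpair := sum_abs_sub_pair_le pt (fun ω ↦ (hypercubeMeasure pt ε θ).real {ω})
    (fun ω ↦ Q.real {ω})
  have htest : ε / m * hammingDist (hypercubeTest pt Q) θ ≤ _ :=
    mul_hammingDist_le_sum_abs_sub_s11 (by positivity) θ
      (fun j ↦ Q.real {pt (j, true)} - Q.real {pt (j, false)})
  simp only [hypercubeMeasure_real_singleton pt hε, hypercubeDensity_sub] at hpair ⊢
  calc ENNReal.ofReal (δ ^ r * (ε / (2 * m)) * hammingDist (hypercubeTest pt Q) θ)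
      ≤ ENNReal.ofReal (δ ^ r * ((∑ ω, |hypercubeDensity pt ε θ ω - Q.real {ω}|) / 2)) := by
        refine ENNReal.ofReal_le_ofReal ?_
        rw [mul_assoc]
        refine mul_le_mul_of_nonneg_left ?_ (by positivity)
        have : ε / (2 * m) * hammingDist (hypercubeTest pt Q) θ
            = ε / m * hammingDist (hypercubeTest pt Q) θ / 2 := by ring
        linarith
    _ = ENNReal.ofReal δ ^ r * (1 - ∑ ω, min (hypercubeMeasure pt ε θ {ω}) (Q {ω})) := by
        rw [one_sub_sum_min_measure_singleton, ENNReal.ofReal_rpow_of_nonneg hδ hr,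
          ← ENNReal.ofReal_mul (by positivity)]
        simp only [hypercubeMeasure_real_singleton pt hε]
    _ ≤ wassersteinPow r (hypercubeMeasure pt ε θ) Q :=
        le_wassersteinPow_of_le_edist (fun x y hxy ↦ by
          rw [edist_dist]; exact ENNReal.ofReal_le_ofReal (hρ x y hxy)) hr _ _

theorem ofReal_mul_sum_hammingDist_le_lintegral_wassersteinPow (hδ : 0 ≤ δ)
    (hρ : ∀ x y : Ω, x ≠ y → δ ≤ dist x y) (hr : 0 ≤ r) {n : ℕ} (hm : m ≠ 0)
    (hε₀ : 0 ≤ ε) (hε₁ : ε ≤ 1) (est : (Fin n → Ω) → Measure Ω)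
    [∀ x, IsProbabilityMeasure (est x)] (θ : Fin m → Bool) :
    ENNReal.ofReal (δ ^ r * (ε / (2 * m)) * ∑ x : Fin n → Ω,
        (hammingDist (hypercubeTest pt (est x)) θ : ℝ) * ∏ i, hypercubeDensity pt ε θ (x i))
      ≤ ∫⁻ x, wassersteinPow r (hypercubeMeasure pt ε θ) (est x)
        ∂Measure.pi fun _ ↦ hypercubeMeasure pt ε θ := by
  have hε : |ε| ≤ 1 := abs_le.2 ⟨by linarith, hε₁⟩
  have := isProbabilityMeasure_hypercubeMeasure pt hm hε θ
  have hq (i : Fin n) (x : Fin n → Ω) := hypercubeDensity_nonneg pt hε θ (x i)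
  rw [lintegral_fintype, mul_sum, ENNReal.ofReal_sum_of_nonneg fun x _ ↦
    mul_nonneg (by positivity) (mul_nonneg (by positivity) (prod_nonneg fun i _ ↦ hq i x))]
  refine sum_le_sum fun x _ ↦ ?_
  rw [Measure.pi_singleton]
  simp only [hypercubeMeasure_singleton]
  rw [← ENNReal.ofReal_prod_of_nonneg fun i _ ↦ hq i x, ← mul_assoc,
    ENNReal.ofReal_mul (by positivity)]
  gcongr
  exact ofReal_mul_hammingDist_le_wassersteinPow pt hδ hρ hr hm hε₀ hε₁ θ (est x)

theorem exists_le_lintegral_wassersteinPow_hypercubeMeasure (hδ : 0 ≤ δ)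
    (hρ : ∀ x y : Ω, x ≠ y → δ ≤ dist x y) (hr : 0 ≤ r) {n : ℕ} (hn : 0 < n) (hm : m ≠ 0)
    (hε₀ : 0 ≤ ε) (hε₁ : ε ≤ 1) (hεm : ε ^ 2 * (4 * n) ≤ m)
    (est : (Fin n → Ω) → Measure Ω) [∀ x, IsProbabilityMeasure (est x)] :
    ∃ θ : Fin m → Bool, ENNReal.ofReal (9 / 128 * δ ^ r * ε) ≤
      ∫⁻ x, wassersteinPow r (hypercubeMeasure pt ε θ) (est x)
        ∂Measure.pi fun _ ↦ hypercubeMeasure pt ε θ := by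
  have hε : |ε| ≤ 1 := abs_le.2 ⟨by linarith, hε₁⟩
  set c := δ ^ r * (ε / (2 * m))
  have hc : 0 ≤ c := by positivity
  set E : (Fin m → Bool) → ℝ := fun θ ↦ ∑ x : Fin n → Ω,
    (hammingDist (hypercubeTest pt (est x)) θ : ℝ) * ∏ i, hypercubeDensity pt ε θ (x i)
  have hprod (θ : Fin m → Bool) (x : Fin n → Ω) : 0 ≤ ∏ i, hypercubeDensity pt ε θ (x i) :=
    prod_nonneg fun i _ ↦ hypercubeDensity_nonneg pt hε θ (x i)
  have hE : 2 ^ m * m * (9 / 32) / 2 ≤ ∑ θ, E θ :=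
    assouad _ (fun θ j ↦ le_sum_min_prod_hypercubeDensity pt hn hε hεm θ j) _
  have hsum : ∑ _θ : Fin m → Bool, ENNReal.ofReal (9 / 128 * δ ^ r * ε) ≤
      ∑ θ, ∫⁻ x, wassersteinPow r (hypercubeMeasure pt ε θ) (est x)
        ∂Measure.pi fun _ ↦ hypercubeMeasure pt ε θ :=
    calc ∑ _θ : Fin m → Bool, ENNReal.ofReal (9 / 128 * δ ^ r * ε)
        = ENNReal.ofReal (c * (2 ^ m * m * (9 / 32) / 2)) := by
          rw [sum_const, card_univ, nsmul_eq_mul, ← ENNReal.ofReal_natCast,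
            ← ENNReal.ofReal_mul (by positivity)]
          congr 1
          simp only [c, Fintype.card_fun, Fintype.card_bool, Fintype.card_fin, Nat.cast_pow]
          field_simp
          ring
      _ ≤ ENNReal.ofReal (c * ∑ θ, E θ) := by gcongr
      _ = ∑ θ, ENNReal.ofReal (c * E θ) := by
          rw [mul_sum, ENNReal.ofReal_sum_of_nonneg fun θ _ ↦
            mul_nonneg hc (sum_nonneg fun x _ ↦ mul_nonneg (by positivity) (hprod θ x))]
      _ ≤ _ := sum_le_sum fun θ _ ↦
          ofReal_mul_sum_hammingDist_le_lintegral_wassersteinPow pt hδ hρ hr hm hε₀ hε₁ est θ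
  obtain ⟨θ, -, hθ⟩ := ENNReal.exists_le_of_sum_le univ_nonempty hsum
  exact ⟨θ, hθ⟩

end MinimaxRisk

theorem three_mul_log_two_div_mul_sqrt_le {k m n : ℕ} (hk : k ≤ 2 * m + 1) (hkn : k ≤ 32 * n)
    (hn : 0 < n) {r : ℝ} (hr : 1 ≤ r) :
    3 * Real.log 2 / 2 ^ (r + 12) * √(((k : ℝ) - 1) / n)
      ≤ 9 / 128 * min 1 √((m : ℝ) / (4 * n)) := by
  have hn' : (0 : ℝ) < n := by exact_mod_cast hn
  have hk' : (k : ℝ) ≤ 2 * m + 1 := by exact_mod_cast hk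
  have hkn' : (k : ℝ) ≤ 32 * n := by exact_mod_cast hkn
  have hpow : (8192 : ℝ) ≤ 2 ^ (r + 12) := by
    calc (8192 : ℝ) = 2 ^ ((13 : ℕ) : ℝ) := by rw [Real.rpow_natCast]; norm_num
      _ ≤ 2 ^ (r + 12) := Real.rpow_le_rpow_of_exponent_le (by norm_num) (by push_cast; linarith)
  have hconst : 3 * Real.log 2 / 2 ^ (r + 12) ≤ 3 / 8192 :=
    div_le_div₀ (by norm_num) (by linarith [Real.log_two_lt_d9]) (by norm_num) hpow
  have hsqrt_nonneg := Real.sqrt_nonneg (((k : ℝ) - 1) / n)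
  refine (mul_le_mul_of_nonneg_right hconst hsqrt_nonneg).trans ?_
  rw [mul_min_of_nonneg _ _ (by norm_num : (0 : ℝ) ≤ 9 / 128)]
  refine le_min ?_ ?_
  · have : √(((k : ℝ) - 1) / n) ≤ √(6 ^ 2) :=
      Real.sqrt_le_sqrt (by rw [div_le_iff₀ hn']; linarith)
    rw [Real.sqrt_sq (by norm_num)] at this
    linarith
  · have : √(((k : ℝ) - 1) / n) ≤ √(192 ^ 2 * (m / (4 * n))) :=
      Real.sqrt_le_sqrt (by rw [div_le_iff₀ hn']; field_simp; linarith)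
    rw [Real.sqrt_mul (by norm_num), Real.sqrt_sq (by norm_num)] at this
    linarith

theorem stmt_11_general {Ω : Type*} [Fintype Ω]
    [MetricSpace Ω] [MeasurableSpace Ω] [BorelSpace Ω]
    (δ : ℝ) (hδ : 0 < δ) (hρ : ∀ x y : Ω, x ≠ y → dist x y = δ)
    (r : ℝ) (hr : 1 ≤ r) (n : ℕ) (hn : 0 < n)
    (hcard2 : 2 ≤ Fintype.card Ω) (hcard : Fintype.card Ω ≤ 32 * n)
    (est : (Fin n → Ω) → MeasureTheory.Measure Ω)
    (hprob : ∀ x, MeasureTheory.IsProbabilityMeasure (est x)) :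
    ENNReal.ofReal (3 * Real.log 2 / 2 ^ (r + 12) * δ ^ r
        * Real.sqrt (((Fintype.card Ω : ℝ) - 1) / n))
      ≤ ⨆ (P : MeasureTheory.Measure Ω) (_ : MeasureTheory.IsProbabilityMeasure P),
          ∫⁻ x, wassersteinPow r P (est x)
            ∂(MeasureTheory.Measure.pi fun _ : Fin n => P) := by
  have : MeasurableSingletonClass Ω := ⟨fun x ↦ isClosed_singleton.measurableSet⟩
  set m := Fintype.card Ω / 2 with hm_def
  have hm : m ≠ 0 := by omega
  have hcard_pairs : Fintype.card (Fin m × Bool) ≤ Fintype.card Ω := by simp; omega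
  obtain ⟨pt⟩ := Function.Embedding.nonempty_of_card_le hcard_pairs
  set ε := min 1 √((m : ℝ) / (4 * n))
  have hε₀ : 0 ≤ ε := le_min zero_le_one (Real.sqrt_nonneg _)
  have hε₁ : ε ≤ 1 := min_le_left _ _
  have hεm : ε ^ 2 * (4 * n) ≤ m := by
    have h := pow_le_pow_left₀ hε₀ (min_le_right 1 √((m : ℝ) / (4 * n))) 2
    rwa [Real.sq_sqrt (by positivity), le_div_iff₀ (by positivity)] at h
  obtain ⟨θ, hθ⟩ := exists_le_lintegral_wassersteinPow_hypercubeMeasure pt hδ.le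
    (fun x y hxy ↦ (hρ x y hxy).ge) (zero_le_one.trans hr) hn hm hε₀ hε₁ hεm est
  refine le_trans ?_ (le_iSup₂_of_le (hypercubeMeasure pt ε θ)
    (isProbabilityMeasure_hypercubeMeasure pt hm (abs_le.2 ⟨by linarith, hε₁⟩) θ) hθ)
  refine ENNReal.ofReal_le_ofReal ?_
  have hrate := three_mul_log_two_div_mul_sqrt_le (m := m) (by omega) hcard hn hr
  calc _ = δ ^ r * (3 * Real.log 2 / 2 ^ (r + 12) * √(((Fintype.card Ω : ℝ) - 1) / n)) := by ring
    _ ≤ δ ^ r * (9 / 128 * ε) := by gcongr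
    _ = 9 / 128 * δ ^ r * ε := by ring

/-- Example 1 (lower bound): minimax lower bound on a finite space with the scaled
discrete metric `ρ(x,y) = δ·1{x ≠ y}`. -/
theorem stmt_11 {Ω : Type*} [Fintype Ω]
    [MetricSpace Ω] [MeasurableSpace Ω] [BorelSpace Ω]
    (δ : ℝ) (hδ : 0 < δ) (hρ : ∀ x y : Ω, x ≠ y → dist x y = δ)
    (r : ℝ) (hr : 1 ≤ r) (n : ℕ) (hn : 0 < n)
    (hcard2 : 2 ≤ Fintype.card Ω) (hcard : Fintype.card Ω ≤ 32 * n)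
    (est : (Fin n → Ω) → MeasureTheory.Measure Ω) (hmeas : Measurable est)
    (hprob : ∀ x, MeasureTheory.IsProbabilityMeasure (est x)) :
    ENNReal.ofReal (3 * Real.log 2 / 2 ^ (r + 12) * δ ^ r
        * Real.sqrt (((Fintype.card Ω : ℝ) - 1) / n))
      ≤ ⨆ (P : MeasureTheory.Measure Ω) (_ : MeasureTheory.IsProbabilityMeasure P),
          ∫⁻ x, wassersteinPow r P (est x)
            ∂(MeasureTheory.Measure.pi fun _ : Fin n => P) :=
  stmt_11_general δ hδ hρ r hr n hn hcard2 hcard est hprob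
end
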